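/- arXiv:2509.06352 — 5 statements merged into one kernel-verified Lean document; each statement's English description precedes it below -/
import Mathlib

section
/- For every s with 1/2 < s ≤ 1 there exists a constant γ > 0, depending only on s, H and c_m, with the following property: for every coefficient c, every μ > 0 and λ ∈ ℝ, and every Dirichlet solution u of the reduced problem, setting K := sup_{y∈[0,H]} |λ − c(y)μ²|, one has ∫₀^H u'(y)² dy ≤ (1/(2c_m))(1 + K²)∫₀^H u(y)² dy, and moreover |u(y)| ≤ γ (1 + K²)^{s/2} (∫₀^H u² )^{1/2} for every y ∈ [0,H]. -/
open MeasureTheory Set Filter Topology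

noncomputable section

/-- `u` (with flux `v = c·u'` and weak derivative `g = u'`) is a solution of the reduced
problem `(c u')' + (λ - c μ²) u = 0` on the interval `[a, b]`:
`u` is absolutely continuous with derivative `g ∈ L²`, the flux `v` agrees a.e. with `c·g`,
and `v` is absolutely continuous with derivative `(c μ² - λ)·u`. -/
def IsReducedSolutionOn (a b : ℝ) (c : ℝ → ℝ) (μ lam : ℝ) (u v g : ℝ → ℝ) : Prop :=
  IntervalIntegrable g volume a b ∧
  IntervalIntegrable (fun t => g t ^ 2) volume a b ∧
  (∀ y ∈ Set.Icc a b, u y = u a + ∫ t in a..y, g t) ∧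
  (∀ᵐ y ∂volume.restrict (Set.Ioo a b), v y = c y * g y) ∧
  IntervalIntegrable (fun t => (c t * μ ^ 2 - lam) * u t) volume a b ∧
  (∀ y ∈ Set.Icc a b, v y = v a + ∫ t in a..y, (c t * μ ^ 2 - lam) * u t)

/-- A coefficient on `[0, H]`: measurable and bounded between `cm` and `cM`. -/
def IsCoeff (H cm cM : ℝ) (c : ℝ → ℝ) : Prop :=
  Measurable c ∧ ∀ y ∈ Set.Icc (0 : ℝ) H, cm ≤ c y ∧ c y ≤ cM

lemma Iic_inter_Ioc' (a b y : ℝ) (hy : y ≤ b) : Iic y ∩ Ioc a b = Ioc a y := by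
  ext t; simp only [mem_inter_iff, mem_Iic, mem_Ioc]; constructor
  · rintro ⟨h1, h2, h3⟩; exact ⟨h2, h1⟩
  · rintro ⟨h1, h2⟩; exact ⟨h2, h1, h2.trans hy⟩

lemma ibp_fubini (a b : ℝ) (g w : ℝ → ℝ)
    (hg : IntegrableOn g (Ioc a b)) (hw : IntegrableOn w (Ioc a b)) :
    (∫ y in Ioc a b, (∫ t in Ioc a y, g t) * w y)
      + (∫ y in Ioc a b, g y * ∫ t in Ioc a y, w t)
    = (∫ t in Ioc a b, g t) * (∫ t in Ioc a b, w t) := by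
  set μ := volume.restrict (Ioc a b) with hμ
  have hgi : Integrable g μ := hg
  have hwi : Integrable w μ := hw
  have key : ∀ (f : ℝ → ℝ), ∀ y ∈ Ioc a b,
      (∫ t in Ioc a y, f t) = ∫ t, (Iic y).indicator f t ∂μ := by
    intro f y hy
    rw [integral_indicator measurableSet_Iic, hμ, Measure.restrict_restrict measurableSet_Iic,
      Iic_inter_Ioc' a b y hy.2]
  set h : ℝ × ℝ → ℝ := fun p => g p.1 * w p.2 with hh
  set h' : ℝ × ℝ → ℝ := fun p => w p.1 * g p.2 with hh'
  have hhi : Integrable h (μ.prod μ) := hgi.mul_prod hwi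
  have hhi' : Integrable h' (μ.prod μ) := hwi.mul_prod hgi
  set D : Set (ℝ × ℝ) := {p | p.1 ≤ p.2} with hD
  set D' : Set (ℝ × ℝ) := {p | p.2 ≤ p.1} with hD'
  have hDm : MeasurableSet D := measurableSet_le measurable_fst measurable_snd
  have hDm' : MeasurableSet D' := measurableSet_le measurable_snd measurable_fst
  set F : ℝ × ℝ → ℝ := D.indicator h with hF
  set F' : ℝ × ℝ → ℝ := D.indicator h' with hF'
  set f : ℝ × ℝ → ℝ := D'.indicator h with hf
  have hFi : Integrable F (μ.prod μ) := hhi.indicator hDm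
  have hFi' : Integrable F' (μ.prod μ) := hhi'.indicator hDm
  have hfi : Integrable f (μ.prod μ) := hhi.indicator hDm'
  -- first integral = ∫ F
  have e1 : (∫ y in Ioc a b, (∫ t in Ioc a y, g t) * w y) = ∫ p, F p ∂(μ.prod μ) := by
    rw [integral_prod_symm F hFi]
    refine (setIntegral_congr_fun measurableSet_Ioc fun y hy => ?_).symm
    have hFy : ∀ x : ℝ, F (x, y) = (Iic y).indicator g x * w y := by
      intro x
      by_cases hx : x ≤ y
      · simp [hF, hD, hh, Set.indicator_of_mem, hx,
          Set.indicator_of_mem (show x ∈ Iic y from hx)]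
      · simp [hF, hD, hh, Set.indicator_of_notMem, hx,
          Set.indicator_of_notMem (show x ∉ Iic y from hx)]
    simp_rw [hFy]
    rw [integral_mul_const, ← key g y hy]
  -- second integral = ∫ F'
  have e2 : (∫ y in Ioc a b, g y * ∫ t in Ioc a y, w t) = ∫ p, F' p ∂(μ.prod μ) := by
    rw [integral_prod_symm F' hFi']
    refine (setIntegral_congr_fun measurableSet_Ioc fun y hy => ?_).symm
    have hFy : ∀ x : ℝ, F' (x, y) = (Iic y).indicator w x * g y := by
      intro x
      by_cases hx : x ≤ y
      · simp [hF', hD, hh', Set.indicator_of_mem, hx,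
          Set.indicator_of_mem (show x ∈ Iic y from hx), mul_comm]
      · simp [hF', hD, hh', Set.indicator_of_notMem, hx,
          Set.indicator_of_notMem (show x ∉ Iic y from hx)]
    simp_rw [hFy]
    rw [integral_mul_const, ← key w y hy, mul_comm]
  -- ∫ F' = ∫ f by swapping coordinates
  have e3 : ∫ p, F' p ∂(μ.prod μ) = ∫ p, f p ∂(μ.prod μ) := by
    have : ∀ z : ℝ × ℝ, f z.swap = F' z := by
      intro z
      by_cases hz : z.1 ≤ z.2
      · simp only [hf, hF', hD', hD, Prod.swap]
        rw [Set.indicator_of_mem (by simpa using hz), Set.indicator_of_mem (by simpa using hz)]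
        simp [hh, hh', mul_comm]
      · simp only [hf, hF', hD', hD, Prod.swap]
        rw [Set.indicator_of_notMem (by simpa using hz),
          Set.indicator_of_notMem (by simpa using hz)]
    calc ∫ p, F' p ∂(μ.prod μ) = ∫ z, f z.swap ∂(μ.prod μ) := by simp_rw [this]
      _ = ∫ p, f p ∂(μ.prod μ) := integral_prod_swap f
  -- diagonal is null
  have hdiag : (μ.prod μ) {p : ℝ × ℝ | p.1 = p.2} = 0 := by
    have hm : MeasurableSet {p : ℝ × ℝ | p.1 = p.2} :=
      measurableSet_eq_fun measurable_fst measurable_snd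
    rw [Measure.prod_apply hm]
    have : ∀ x : ℝ, μ (Prod.mk x ⁻¹' {p : ℝ × ℝ | p.1 = p.2}) = 0 := by
      intro x
      have : Prod.mk x ⁻¹' {p : ℝ × ℝ | p.1 = p.2} = {x} := by
        ext t; simp [eq_comm]
      rw [this]
      exact measure_singleton x
    simp [this]
  -- F + f = h a.e.
  have hae : (fun p => F p + f p) =ᵐ[μ.prod μ] h := by
    have hsub : {p : ℝ × ℝ | F p + f p ≠ h p} ⊆ {p : ℝ × ℝ | p.1 = p.2} := by
      intro p hp
      by_contra hne
      rcases lt_or_gt_of_ne hne with hlt | hgt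
      · apply hp
        simp only [hF, hf]
        rw [Set.indicator_of_mem (show p ∈ D from hlt.le),
          Set.indicator_of_notMem (show p ∉ D' from not_le.2 hlt)]
        ring
      · apply hp
        simp only [hF, hf]
        rw [Set.indicator_of_notMem (show p ∉ D from not_le.2 hgt),
          Set.indicator_of_mem (show p ∈ D' from hgt.le)]
        ring
    exact measure_mono_null hsub hdiag
  rw [e1, e2, e3, ← integral_add hFi hfi, integral_congr_ae hae, hh]
  rw [integral_prod_mul g w]


/-- energy and trace estimates for Dirichlet solutions of the reduced problem. -/
theorem stmt0 (cm H s : ℝ) (hcm : 0 < cm) (hH : 0 < H)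
    (hs : 1 / 2 < s) (hs' : s ≤ 1) :
    ∃ γ : ℝ, 0 < γ ∧
      ∀ cM : ℝ, cm < cM →
      ∀ c : ℝ → ℝ, IsCoeff H cm cM c →
      ∀ μ lam : ℝ, 0 < μ →
      ∀ u v g : ℝ → ℝ, IsReducedSolutionOn 0 H c μ lam u v g →
      u 0 = 0 → u H = 0 →
      ∀ K : ℝ, (∀ y ∈ Set.Icc (0 : ℝ) H, |lam - c y * μ ^ 2| ≤ K) →
      (∫ y in (0:ℝ)..H, g y ^ 2) ≤ 1 / (2 * cm) * (1 + K ^ 2) * ∫ y in (0:ℝ)..H, u y ^ 2 ∧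
      ∀ y ∈ Set.Icc (0 : ℝ) H,
        |u y| ≤ γ * (1 + K ^ 2) ^ (s / 2) * Real.sqrt (∫ t in (0:ℝ)..H, u t ^ 2) := by
  refine ⟨Real.sqrt 2 * (1 / (2 * cm)) ^ ((1:ℝ)/4), by positivity, ?_⟩
  intro cM hcM c hc μ lam hμ u v g hsol hu0 huH K hK
  obtain ⟨hgI, hg2I, hu, hvae, hwI, hv⟩ := hsol
  set w : ℝ → ℝ := fun t => (c t * μ ^ 2 - lam) * u t with hw
  -- restricted-measure equality Ioc/Icc
  have hres : volume.restrict (Ioc (0:ℝ) H) = volume.restrict (Icc (0:ℝ) H) :=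
    Measure.restrict_congr_set Ioc_ae_eq_Icc
  have hresoo : volume.restrict (Ioo (0:ℝ) H) = volume.restrict (Ioc (0:ℝ) H) :=
    Measure.restrict_congr_set Ioo_ae_eq_Ioc
  -- integrability on Ioc
  have hgon : IntegrableOn g (Ioc 0 H) :=
    (intervalIntegrable_iff_integrableOn_Ioc_of_le hH.le).1 hgI
  have hg2on : IntegrableOn (fun t => g t ^ 2) (Ioc 0 H) :=
    (intervalIntegrable_iff_integrableOn_Ioc_of_le hH.le).1 hg2I
  have hwon : IntegrableOn w (Ioc 0 H) :=
    (intervalIntegrable_iff_integrableOn_Ioc_of_le hH.le).1 hwI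
  have hgIcc : IntegrableOn g (Icc 0 H) := by
    unfold IntegrableOn; rw [← hres]; exact hgon
  -- u equals the primitive U on Icc
  set U : ℝ → ℝ := fun y => ∫ t in Ioc 0 y, g t with hU
  have huU : ∀ y ∈ Icc (0:ℝ) H, u y = U y := by
    intro y hy
    rw [hu y hy, hu0, zero_add, intervalIntegral.integral_of_le hy.1]
  have hUcont : ContinuousOn U (Icc 0 H) := intervalIntegral.continuousOn_primitive hgIcc
  -- bound on u over Icc
  obtain ⟨M, hM⟩ := (isCompact_Icc (a := (0:ℝ)) (b := H)).exists_bound_of_continuousOn hUcont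
  have huM : ∀ y ∈ Icc (0:ℝ) H, |u y| ≤ M := fun y hy => by
    rw [huU y hy]; exact hM y hy
  -- u, u^2 integrable on Ioc
  have hU2cont : ContinuousOn (fun y => U y ^ 2) (Icc 0 H) := hUcont.pow 2
  have hu2on : IntegrableOn (fun y => u y ^ 2) (Ioc 0 H) := by
    have h1 : IntegrableOn (fun y => U y ^ 2) (Icc 0 H) := hU2cont.integrableOn_Icc
    have h2 : IntegrableOn (fun y => U y ^ 2) (Ioc 0 H) := h1.mono_set Ioc_subset_Icc_self
    exact h2.congr_fun (fun y hy => by rw [huU y (Ioc_subset_Icc_self hy)]) measurableSet_Ioc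
  have huon : IntegrableOn u (Ioc 0 H) := by
    have h2 : IntegrableOn U (Ioc 0 H) :=
      (hUcont.integrableOn_Icc).mono_set Ioc_subset_Icc_self
    exact h2.congr_fun (fun y hy => (huU y (Ioc_subset_Icc_self hy)).symm ▸ rfl)
      measurableSet_Ioc
  have huaem : AEStronglyMeasurable u (volume.restrict (Ioc 0 H)) := huon.aestronglyMeasurable
  set Q : ℝ := ∫ y in Ioc (0:ℝ) H, u y ^ 2 with hQ
  set G2 : ℝ := ∫ y in Ioc (0:ℝ) H, g y ^ 2 with hG2
  have hQ0 : 0 ≤ Q := setIntegral_nonneg measurableSet_Ioc fun y _ => sq_nonneg _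
  have hK0 : 0 ≤ K := le_trans (abs_nonneg _) (hK H ⟨hH.le, le_refl H⟩)
  -- ∫ g over Ioc = 0
  have hgint0 : (∫ t in Ioc (0:ℝ) H, g t) = 0 := by
    have := hu H ⟨hH.le, le_refl H⟩
    rw [huH, hu0, zero_add, intervalIntegral.integral_of_le hH.le] at this
    linarith [this.symm]
  -- u as primitive
  have huIoc : ∀ t ∈ Icc (0:ℝ) H, u t = ∫ x in Ioc (0:ℝ) t, g x := fun t ht => by
    rw [huU t ht]
  -- energy: cm * G2 ≤ ∫ c g²
  have hcgon : IntegrableOn (fun y => c y * g y ^ 2) (Ioc 0 H) := by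
    refine Integrable.mono' (hg2on.const_mul cM)
      (hc.1.aestronglyMeasurable.mul hg2on.aestronglyMeasurable) ?_
    refine (ae_restrict_iff' measurableSet_Ioc).2 (Eventually.of_forall fun y hy => ?_)
    have hcy := hc.2 y (Ioc_subset_Icc_self hy)
    rw [Real.norm_eq_abs, abs_of_nonneg (mul_nonneg (le_trans hcm.le hcy.1) (sq_nonneg _))]
    exact mul_le_mul_of_nonneg_right hcy.2 (sq_nonneg _)
  have hE1 : cm * G2 ≤ ∫ y in Ioc (0:ℝ) H, c y * g y ^ 2 := by
    rw [hG2, ← integral_const_mul]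
    refine setIntegral_mono_on (hg2on.const_mul cm) hcgon measurableSet_Ioc fun y hy => ?_
    exact mul_le_mul_of_nonneg_right (hc.2 y (Ioc_subset_Icc_self hy)).1 (sq_nonneg _)
  have hE2 : (∫ y in Ioc (0:ℝ) H, c y * g y ^ 2) = ∫ y in Ioc (0:ℝ) H, v y * g y := by
    rw [← hresoo]
    refine integral_congr_ae ?_
    filter_upwards [hvae] with y hy
    rw [hy]; ring
  -- the primitive of w
  have hwIcc : IntegrableOn w (Icc 0 H) := by
    unfold IntegrableOn; rw [← hres]; exact hwon
  have hvP : ∀ y ∈ Icc (0:ℝ) H, v y = v 0 + ∫ t in Ioc (0:ℝ) y, w t := fun y hy => by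
    rw [hv y hy, intervalIntegral.integral_of_le hy.1]
  have hPcont : ContinuousOn (fun y => ∫ t in Ioc (0:ℝ) y, w t) (Icc 0 H) :=
    intervalIntegral.continuousOn_primitive hwIcc
  obtain ⟨MP, hMP⟩ := (isCompact_Icc (a := (0:ℝ)) (b := H)).exists_bound_of_continuousOn hPcont
  have hPaem : AEStronglyMeasurable (fun y => ∫ t in Ioc (0:ℝ) y, w t)
      (volume.restrict (Ioc 0 H)) := by
    rw [hres]; exact hPcont.aestronglyMeasurable measurableSet_Icc
  have hPgon : IntegrableOn (fun y => (∫ t in Ioc (0:ℝ) y, w t) * g y) (Ioc 0 H) := by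
    refine Integrable.mono' (hgon.norm.const_mul MP) (hPaem.mul hgon.aestronglyMeasurable) ?_
    refine (ae_restrict_iff' measurableSet_Ioc).2 (Eventually.of_forall fun y hy => ?_)
    rw [Real.norm_eq_abs, abs_mul]
    refine mul_le_mul_of_nonneg_right ?_ (abs_nonneg _)
    simpa using hMP y (Ioc_subset_Icc_self hy)
  -- u*w integrable
  have huwon : IntegrableOn (fun y => u y * w y) (Ioc 0 H) := by
    refine Integrable.mono' (hwon.norm.const_mul M) (huaem.mul hwon.aestronglyMeasurable) ?_
    refine (ae_restrict_iff' measurableSet_Ioc).2 (Eventually.of_forall fun y hy => ?_)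
    rw [Real.norm_eq_abs, abs_mul]
    refine mul_le_mul_of_nonneg_right ?_ (abs_nonneg _)
    simpa using huM y (Ioc_subset_Icc_self hy)
  -- IBP: ∫ v g = -∫ u w
  have hibp := ibp_fubini 0 H g w hgon hwon
  rw [hgint0, zero_mul] at hibp
  have hfirst : (∫ y in Ioc (0:ℝ) H, (∫ t in Ioc (0:ℝ) y, g t) * w y)
      = ∫ y in Ioc (0:ℝ) H, u y * w y := by
    refine setIntegral_congr_fun measurableSet_Ioc fun y hy => ?_
    rw [← huIoc y (Ioc_subset_Icc_self hy)]
  have hvg : (∫ y in Ioc (0:ℝ) H, v y * g y) = - ∫ y in Ioc (0:ℝ) H, u y * w y := by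
    have hsplit : (∫ y in Ioc (0:ℝ) H, v y * g y)
        = ∫ y in Ioc (0:ℝ) H, (v 0 * g y + (∫ t in Ioc (0:ℝ) y, w t) * g y) := by
      refine setIntegral_congr_fun measurableSet_Ioc fun y hy => ?_
      rw [hvP y (Ioc_subset_Icc_self hy)]; ring
    rw [hsplit, integral_add (hgon.const_mul (v 0)) hPgon, integral_const_mul, hgint0, mul_zero,
      zero_add]
    have hsecond : (∫ y in Ioc (0:ℝ) H, g y * ∫ t in Ioc (0:ℝ) y, w t)
        = ∫ y in Ioc (0:ℝ) H, (∫ t in Ioc (0:ℝ) y, w t) * g y := by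
      refine setIntegral_congr_fun measurableSet_Ioc fun y hy => ?_
      ring
    rw [hfirst, hsecond] at hibp
    linarith
  -- energy estimate
  have hEK : cm * G2 ≤ K * Q := by
    have h3 : - (∫ y in Ioc (0:ℝ) H, u y * w y) ≤ K * Q := by
      rw [← integral_neg]
      have hmono : (∫ y in Ioc (0:ℝ) H, -(u y * w y)) ≤ ∫ y in Ioc (0:ℝ) H, K * u y ^ 2 := by
        refine setIntegral_mono_on huwon.neg (hu2on.const_mul K) measurableSet_Ioc fun y hy => ?_
        have hKy := hK y (Ioc_subset_Icc_self hy)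
        have he : -(u y * w y) = (lam - c y * μ ^ 2) * u y ^ 2 := by rw [hw]; ring
        rw [he]
        exact mul_le_mul_of_nonneg_right ((le_abs_self _).trans hKy) (sq_nonneg _)
      refine hmono.trans_eq ?_
      rw [integral_const_mul, ← hQ]
    linarith [hE1, hE2, hvg, h3]
  have henergy : G2 ≤ 1 / (2 * cm) * (1 + K ^ 2) * Q := by
    have hK2 : K * Q ≤ (1 + K ^ 2) / 2 * Q := by nlinarith [sq_nonneg (K - 1), hQ0]
    have h5 : cm * G2 ≤ (1 + K ^ 2) / 2 * Q := le_trans hEK hK2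
    have h6 : G2 ≤ ((1 + K ^ 2) / 2 * Q) / cm := by
      rw [le_div_iff₀ hcm]
      linarith [h5, mul_comm G2 cm]
    have h7 : ((1 + K ^ 2) / 2 * Q) / cm = 1 / (2 * cm) * (1 + K ^ 2) * Q := by
      field_simp
    linarith [h6, h7]
  constructor
  · rw [intervalIntegral.integral_of_le hH.le, intervalIntegral.integral_of_le hH.le,
      ← hG2, ← hQ]
    exact henergy
  · intro y hy
    rw [intervalIntegral.integral_of_le hH.le, ← hQ]
    set C : ℝ := (1 + K ^ 2) * (1 / (2 * cm)) with hC
    have hCpos : 0 < C := by rw [hC]; positivity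
    clear_value C
    have henergyC : G2 ≤ C * Q := by
      have : C * Q = 1 / (2 * cm) * (1 + K ^ 2) * Q := by rw [hC]; ring
      linarith
    set ε := Real.sqrt C with hε
    have hεpos : 0 < ε := Real.sqrt_pos.2 hCpos
    have hε2 : ε ^ 2 = C := Real.sq_sqrt hCpos.le
    have hseC : Real.sqrt ε = C ^ ((1:ℝ)/4) := by
      rw [hε, Real.sqrt_eq_rpow, Real.sqrt_eq_rpow, ← Real.rpow_mul hCpos.le]
      norm_num
    clear_value ε
    -- IBP on [0, y]
    have hgy : IntegrableOn g (Ioc 0 y) := hgon.mono_set (Ioc_subset_Ioc_right hy.2)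
    have hibp2 := ibp_fubini 0 y g g hgy hgy
    have h1 : (∫ t in Ioc (0:ℝ) y, (∫ x in Ioc (0:ℝ) t, g x) * g t)
        = ∫ t in Ioc (0:ℝ) y, u t * g t := by
      refine setIntegral_congr_fun measurableSet_Ioc fun t ht => ?_
      rw [← huIoc t ⟨ht.1.le, ht.2.trans hy.2⟩]
    have h2 : (∫ t in Ioc (0:ℝ) y, g t * ∫ x in Ioc (0:ℝ) t, g x)
        = ∫ t in Ioc (0:ℝ) y, u t * g t := by
      refine setIntegral_congr_fun measurableSet_Ioc fun t ht => ?_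
      rw [← huIoc t ⟨ht.1.le, ht.2.trans hy.2⟩]; ring
    have h3 : (∫ t in Ioc (0:ℝ) y, g t) = u y := (huIoc y hy).symm
    rw [h1, h2, h3] at hibp2
    have husq : u y ^ 2 = 2 * ∫ t in Ioc (0:ℝ) y, u t * g t := by
      rw [pow_two]; linarith
    -- pointwise Cauchy-Schwarz
    have hpt : ∀ t : ℝ, 2 * (u t * g t) ≤ ε * u t ^ 2 + 1 / ε * g t ^ 2 := by
      intro t
      have h := div_nonneg (sq_nonneg (ε * u t - g t)) hεpos.le
      have hexp : (ε * u t - g t) ^ 2 / ε = ε * u t ^ 2 - 2 * (u t * g t) + 1 / ε * g t ^ 2 := by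
        field_simp
        ring
      linarith [hexp ▸ h]
    have hugon : IntegrableOn (fun t => u t * g t) (Ioc 0 H) := by
      refine Integrable.mono' (hgon.norm.const_mul M) (huaem.mul hgon.aestronglyMeasurable) ?_
      refine (ae_restrict_iff' measurableSet_Ioc).2 (Eventually.of_forall fun t ht => ?_)
      rw [Real.norm_eq_abs, abs_mul]
      refine mul_le_mul_of_nonneg_right ?_ (abs_nonneg _)
      simpa using huM t (Ioc_subset_Icc_self ht)
    have hrhsI : IntegrableOn (fun t => ε * u t ^ 2 + 1 / ε * g t ^ 2) (Ioc 0 H) :=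
      (hu2on.const_mul ε).add (hg2on.const_mul (1/ε))
    have hstep1 : 2 * (∫ t in Ioc (0:ℝ) y, u t * g t)
        ≤ ∫ t in Ioc (0:ℝ) H, (ε * u t ^ 2 + 1 / ε * g t ^ 2) := by
      rw [← integral_const_mul]
      calc (∫ t in Ioc (0:ℝ) y, 2 * (u t * g t))
          ≤ ∫ t in Ioc (0:ℝ) y, (ε * u t ^ 2 + 1 / ε * g t ^ 2) := by
            refine setIntegral_mono_on
              ((hugon.mono_set (Ioc_subset_Ioc_right hy.2)).const_mul 2)
              (hrhsI.mono_set (Ioc_subset_Ioc_right hy.2)) measurableSet_Ioc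
              fun t _ => hpt t
        _ ≤ ∫ t in Ioc (0:ℝ) H, (ε * u t ^ 2 + 1 / ε * g t ^ 2) := by
            refine setIntegral_mono_set hrhsI
              (Eventually.of_forall fun t => by positivity)
              (HasSubset.Subset.eventuallyLE (Ioc_subset_Ioc_right hy.2))
    have hre : (∫ t in Ioc (0:ℝ) H, (ε * u t ^ 2 + 1 / ε * g t ^ 2))
        = ε * Q + 1 / ε * G2 := by
      rw [integral_add (hu2on.const_mul ε) (hg2on.const_mul (1/ε)), integral_const_mul,
        integral_const_mul, hQ, hG2]
    have hQε : u y ^ 2 ≤ 2 * ε * Q := by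
      have hmul : 1 / ε * G2 ≤ 1 / ε * (C * Q) :=
        mul_le_mul_of_nonneg_left henergyC (by positivity)
      have hCe : 1 / ε * (C * Q) = ε * Q := by
        rw [← hε2]; field_simp
      linarith [husq, hstep1, hre, hmul, hCe]
    have habs : |u y| ≤ Real.sqrt (2 * ε * Q) := by
      rw [← Real.sqrt_sq_eq_abs]
      exact Real.sqrt_le_sqrt hQε
    have hsqrt : Real.sqrt (2 * ε * Q) = Real.sqrt 2 * Real.sqrt ε * Real.sqrt Q := by
      rw [Real.sqrt_mul (mul_nonneg (by norm_num) hεpos.le), Real.sqrt_mul (by norm_num : (0:ℝ) ≤ 2)]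
    have hC14 : C ^ ((1:ℝ)/4) = (1 + K ^ 2) ^ ((1:ℝ)/4) * (1 / (2 * cm)) ^ ((1:ℝ)/4) := by
      rw [hC, Real.mul_rpow (by positivity) (by positivity)]
    have hexp : (1 + K ^ 2) ^ ((1:ℝ)/4) ≤ (1 + K ^ 2) ^ (s / 2) :=
      Real.rpow_le_rpow_of_exponent_le (le_add_of_nonneg_right (sq_nonneg K)) (by linarith)
    have hse : Real.sqrt ε ≤ (1 + K ^ 2) ^ (s / 2) * (1 / (2 * cm)) ^ ((1:ℝ)/4) := by
      rw [hseC, hC14]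
      exact mul_le_mul_of_nonneg_right hexp (by positivity)
    calc |u y| ≤ Real.sqrt 2 * Real.sqrt ε * Real.sqrt Q := by rw [← hsqrt]; exact habs
      _ ≤ Real.sqrt 2 * ((1 + K ^ 2) ^ (s / 2) * (1 / (2 * cm)) ^ ((1:ℝ)/4)) * Real.sqrt Q := by
          refine mul_le_mul_of_nonneg_right ?_ (Real.sqrt_nonneg Q)
          exact mul_le_mul_of_nonneg_left hse (Real.sqrt_nonneg 2)
      _ = Real.sqrt 2 * (1 / (2 * cm)) ^ ((1:ℝ)/4) * (1 + K ^ 2) ^ (s / 2) * Real.sqrt Q := by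
          ring
end
end

section
/- Let c be a coefficient, let 0 ≤ β < H, and let c₁ ∈ (c_m, c_M] satisfy c(y) ≥ c₁ for a.e. y ∈ (β,H). Let μ > 0 and λ ∈ ℝ with λ < c₁μ², and set ξ₁² := μ² − λ/c₁ > 0. Let u, with flux v, be absolutely continuous on [β,H] and satisfy v(y) = c(y)u'(y) a.e. and v'(y) = (c(y)μ² − λ)u(y) for a.e. y ∈ (β,H), together with u(H) = 0 and v(H) < 0. Then u(y) > 0 for all y ∈ [β,H), and u(β)² ≥ 2 (c_m/c_M) ξ₁² ∫_β^H (σ − β) u(σ)² dσ. -/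
/-!
Below the well threshold the source `(cμ² - λ) u` of the flux has the sign of `u`, so the flux
increases wherever `u ≥ 0`. If `u ≤ 0` somewhere in `[β, H)`, let `y₀` be the last such point
(it stays away from `H`, where `u' = v / c` is close to `v(H) / c < 0`). Then `u ≥ 0` on
`(y₀, H)`, so `v ≤ v(H) < 0` on `[y₀, H]`, hence `u' ≤ v(H) / c_M` and
`u(y₀) ≥ -v(H) (H - y₀) / c_M > 0`, a contradiction. So `u > 0` on `[β, H)`, `v ≤ v(H) < 0` on
all of `[β, H]`, and `u` is decreasing.

For the bound, integrate the flux equation over `[y, H]` and use that `u` decreases: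
`(c₁μ² - λ) ∫_y^H u² ≤ u(y) ∫_y^H (cμ² - λ) u ≤ -u(y) v(y) ≤ c_M · (-u u')(y)`.
Integrating in `y` over `[β, H]` turns the left side into `(c₁μ² - λ) ∫ (σ - β) u(σ)² dσ`
and the right side into `c_M u(β)² / 2`; finally `c₁μ² - λ = c₁ ξ₁² ≥ c_m ξ₁²`.
-/

open MeasureTheory Set Filter Topology

noncomputable section

open scoped Interval

theorem IntervalIntegrable.ae_deriv_integral {f : ℝ → ℝ} {a b : ℝ}
    (hf : IntervalIntegrable f volume a b) :
    ∀ᵐ x, x ∈ Ι a b → deriv (fun x => ∫ t in a..x, f t) x = f x := by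
  filter_upwards [hf.ae_hasDerivAt_integral] with x hx hxab
  exact (hx (uIoc_subset_uIcc hxab) a left_mem_uIcc).deriv

theorem integral_mul_primitive_self {f : ℝ → ℝ} {a b : ℝ} (hf : IntervalIntegrable f volume a b) :
    ∫ x in a..b, f x * ∫ t in a..x, f t = (∫ t in a..b, f t) ^ 2 / 2 := by
  set F : ℝ → ℝ := fun x => ∫ t in a..x, f t with hFdef
  have hF := hf.absolutelyContinuousOnInterval_intervalIntegral (c := a) left_mem_uIcc
  have hparts := hF.integral_deriv_mul_eq_sub hF
  have hderiv : ∫ x in a..b, (deriv F x * F x + F x * deriv F x)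
      = ∫ x in a..b, 2 * (f x * F x) := by
    refine intervalIntegral.integral_congr_ae ?_
    filter_upwards [hf.ae_deriv_integral] with x hx hxab
    rw [hx hxab]; ring
  rw [hderiv, intervalIntegral.integral_const_mul, hFdef, intervalIntegral.integral_same,
    mul_zero, sub_zero] at hparts
  linarith

theorem integral_mul_eq_sq_sub_sq_of_eq_add_integral {u g : ℝ → ℝ} {a b : ℝ}
    (hg : IntervalIntegrable g volume a b) (hu : ∀ x ∈ uIcc a b, u x = u a + ∫ t in a..x, g t) :
    ∫ x in a..b, u x * g x = (u b ^ 2 - u a ^ 2) / 2 := by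
  have hprim : ContinuousOn (fun x => ∫ t in a..x, g t) (uIcc a b) :=
    intervalIntegral.continuousOn_primitive_interval' hg left_mem_uIcc
  calc ∫ x in a..b, u x * g x
      = ∫ x in a..b, (u a * g x + g x * ∫ t in a..x, g t) := by
        refine intervalIntegral.integral_congr fun x hx => ?_
        simp only [hu x hx]; ring
    _ = u a * (∫ t in a..b, g t) + (∫ t in a..b, g t) ^ 2 / 2 := by
        rw [intervalIntegral.integral_add (hg.const_mul _) (hg.mul_continuousOn hprim),
          intervalIntegral.integral_const_mul, integral_mul_primitive_self hg]
    _ = (u b ^ 2 - u a ^ 2) / 2 := by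
        rw [hu b right_mem_uIcc]; ring

theorem integral_integral_tail_eq_integral_sub_mul {f : ℝ → ℝ} {a b : ℝ}
    (hf : IntervalIntegrable f volume a b) :
    ∫ y in a..b, ∫ t in y..b, f t = ∫ t in a..b, (t - a) * f t := by
  have hF := hf.absolutelyContinuousOnInterval_intervalIntegral (c := a) left_mem_uIcc
  have hι : AbsolutelyContinuousOnInterval (fun x : ℝ => x - a) a b :=
    (contDiff_id.sub contDiff_const).contDiffOn.absolutelyContinuousOnInterval
  have hparts := hι.integral_mul_deriv_eq_deriv_mul hF
  have hlhs : ∫ x in a..b, (x - a) * deriv (fun x => ∫ t in a..x, f t) x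
      = ∫ t in a..b, (t - a) * f t := by
    refine intervalIntegral.integral_congr_ae ?_
    filter_upwards [hf.ae_deriv_integral] with x hx hxab
    rw [hx hxab]
  have htail : ∀ y ∈ uIcc a b, ∫ t in y..b, f t = (∫ t in a..b, f t) - ∫ t in a..y, f t :=
    fun y hy => (intervalIntegral.integral_interval_sub_left hf
      (hf.mono_set (uIcc_subset_uIcc_left hy))).symm
  simp only [deriv_sub_const, deriv_id'', one_mul, sub_self, zero_mul, sub_zero, hlhs] at hparts
  rw [intervalIntegral.integral_congr htail, intervalIntegral.integral_sub
    intervalIntegrable_const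
    (intervalIntegral.continuousOn_primitive_interval' hf left_mem_uIcc).intervalIntegrable,
    intervalIntegral.integral_const, smul_eq_mul, hparts]

theorem sub_eq_integral_of_eq_add_integral {F f : ℝ → ℝ} {a b y z : ℝ}
    (hf : IntervalIntegrable f volume a b) (hF : ∀ x ∈ Icc a b, F x = F a + ∫ t in a..x, f t)
    (hy : y ∈ Icc a b) (hz : z ∈ Icc a b) : F z - F y = ∫ t in y..z, f t := by
  rw [hF z hz, hF y hy, add_sub_add_left_eq_sub, intervalIntegral.integral_interval_sub_left
    (hf.mono_set (uIcc_subset_uIcc_left (Icc_subset_uIcc hz)))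
    (hf.mono_set (uIcc_subset_uIcc_left (Icc_subset_uIcc hy)))]

theorem continuousOn_of_eq_add_integral {F f : ℝ → ℝ} {a b : ℝ}
    (hf : IntervalIntegrable f volume a b) (hF : ∀ x ∈ Icc a b, F x = F a + ∫ t in a..x, f t) :
    ContinuousOn F (Icc a b) :=
  (continuousOn_const.add ((intervalIntegral.continuousOn_primitive_interval' hf
    left_mem_uIcc).mono Icc_subset_uIcc)).congr hF

theorem ae_restrict_Icc_of_ae_restrict_Ioo {p : ℝ → Prop} {a b y z : ℝ}
    (h : ∀ᵐ t ∂volume.restrict (Ioo a b), p t) (hy : a ≤ y) (hz : z ≤ b) :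
    ∀ᵐ t ∂volume.restrict (Icc y z), p t := by
  rw [← Measure.restrict_congr_set Ioo_ae_eq_Icc]
  exact ae_restrict_of_ae_restrict_of_subset (Ioo_subset_Ioo hy hz) h

namespace IsReducedSolutionOn

variable {a b cM c₁ μ lam : ℝ} {c u v g : ℝ → ℝ}

theorem continuousOn (hsol : IsReducedSolutionOn a b c μ lam u v g) : ContinuousOn u (Icc a b) :=
  continuousOn_of_eq_add_integral hsol.1 hsol.2.2.1

theorem continuousOn_flux (hsol : IsReducedSolutionOn a b c μ lam u v g) :
    ContinuousOn v (Icc a b) :=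
  continuousOn_of_eq_add_integral hsol.2.2.2.2.1 hsol.2.2.2.2.2

theorem sub_eq_integral (hsol : IsReducedSolutionOn a b c μ lam u v g) {y z : ℝ}
    (hy : y ∈ Icc a b) (hz : z ∈ Icc a b) : u z - u y = ∫ t in y..z, g t :=
  sub_eq_integral_of_eq_add_integral hsol.1 hsol.2.2.1 hy hz

theorem flux_sub_eq_integral (hsol : IsReducedSolutionOn a b c μ lam u v g) {y z : ℝ}
    (hy : y ∈ Icc a b) (hz : z ∈ Icc a b) :
    v z - v y = ∫ t in y..z, (c t * μ ^ 2 - lam) * u t :=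
  sub_eq_integral_of_eq_add_integral hsol.2.2.2.2.1 hsol.2.2.2.2.2 hy hz

theorem flux_le_of_nonneg (hsol : IsReducedSolutionOn a b c μ lam u v g)
    (hwell : ∀ᵐ t ∂volume.restrict (Ioo a b), c₁ ≤ c t) (hlam : lam ≤ c₁ * μ ^ 2) {y : ℝ}
    (hy : a ≤ y) (hu : ∀ t ∈ Ioo y b, 0 ≤ u t) : ∀ t ∈ Icc y b, v t ≤ v b := by
  intro t ht
  have hb : b ∈ Icc a b := ⟨hy.trans (ht.1.trans ht.2), le_rfl⟩
  have hpos : 0 ≤ ∫ s in t..b, (c s * μ ^ 2 - lam) * u s := by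
    refine intervalIntegral.integral_nonneg_of_ae_restrict ht.2 ?_
    have hu' : ∀ᵐ s ∂volume.restrict (Ioo a b), s ∈ Ioo y b → 0 ≤ u s := ae_of_all _ hu
    filter_upwards [ae_restrict_Icc_of_ae_restrict_Ioo (hwell.and hu') (hy.trans ht.1) le_rfl,
      ae_restrict_Icc_of_ae_restrict_Ioo (ae_restrict_mem measurableSet_Ioo) ht.1 le_rfl]
      with s ⟨hcs, hus⟩ hs
    exact mul_nonneg (by nlinarith [sq_nonneg μ]) (hus hs)
  linarith [hsol.flux_sub_eq_integral ⟨hy.trans ht.1, ht.2⟩ hb]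

theorem sub_le_of_flux_le (hsol : IsReducedSolutionOn a b c μ lam u v g) (hcM : 0 < cM)
    (hc : ∀ᵐ t ∂volume.restrict (Ioo a b), 0 < c t ∧ c t ≤ cM) {y z K : ℝ} (hK : K ≤ 0)
    (hy : a ≤ y) (hyz : y ≤ z) (hz : z ≤ b) (hv : ∀ t ∈ Icc y z, v t ≤ K) :
    u z - u y ≤ K / cM * (z - y) := by
  obtain ⟨hg, -, hu, hvg, -, -⟩ := hsol
  have hgK : ∀ᵐ t ∂volume.restrict (Icc y z), g t ≤ K / cM := by
    filter_upwards [ae_restrict_Icc_of_ae_restrict_Ioo (hc.and hvg) hy hz,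
      ae_restrict_mem measurableSet_Icc] with t ⟨⟨hct, hctM⟩, hvt⟩ ht
    rw [le_div_iff₀ hcM]
    nlinarith [hv t ht]
  have hmono := intervalIntegral.integral_mono_ae_restrict hyz
    (hg.mono_set (uIcc_subset_uIcc (Icc_subset_uIcc ⟨hy, hyz.trans hz⟩)
      (Icc_subset_uIcc ⟨hy.trans hyz, hz⟩))) intervalIntegrable_const hgK
  rw [intervalIntegral.integral_const, smul_eq_mul] at hmono
  rw [sub_eq_integral_of_eq_add_integral hg hu ⟨hy, hyz.trans hz⟩ ⟨hy.trans hyz, hz⟩]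
  linarith

section NegativeFluxAtRight

variable (hsol : IsReducedSolutionOn a b c μ lam u v g) (hcM : 0 < cM)
  (hc : ∀ᵐ t ∂volume.restrict (Ioo a b), 0 < c t ∧ c t ≤ cM)
  (hwell : ∀ᵐ t ∂volume.restrict (Ioo a b), c₁ ≤ c t) (hlam : lam ≤ c₁ * μ ^ 2)
  (hub : u b = 0) (hvb : v b < 0)
include hsol hcM hc hub

theorem pos_of_flux_le {z K : ℝ} (hz : z ∈ Ico a b) (hK : K < 0)
    (hv : ∀ t ∈ Icc z b, v t ≤ K) : 0 < u z := by
  have := hsol.sub_le_of_flux_le hcM hc hK.le hz.1 hz.2.le le_rfl hv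
  have : K / cM * (b - z) < 0 := mul_neg_of_neg_of_pos (div_neg_of_neg_of_pos hK hcM)
    (sub_pos.2 hz.2)
  linarith

include hwell hlam hvb

theorem pos : ∀ y ∈ Ico a b, 0 < u y := by
  intro y hy
  have hab : a < b := hy.1.trans_lt hy.2
  obtain ⟨z₀, hz₀b, hz₀⟩ : ∃ z₀ < b, Icc z₀ b ⊆ {t | v t < v b / 2} := by
    have hev : ∀ᶠ t in 𝓝[≤] b, v t < v b / 2 := by
      rw [← nhdsWithin_Icc_eq_nhdsLE hab]
      exact (hsol.continuousOn_flux b (right_mem_Icc.2 hab.le)).eventually_lt_const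
        (by linarith)
    exact mem_nhdsLE_iff_exists_Icc_subset.1 hev
  set z₁ := max a z₀
  have hnear : ∀ z ∈ Ico z₁ b, 0 < u z := fun z hz =>
    hsol.pos_of_flux_le hcM hc hub ⟨(le_max_left _ _).trans hz.1, hz.2⟩ (by linarith)
      fun t ht => (hz₀ ⟨(le_max_right _ _).trans (hz.1.trans ht.1), ht.2⟩).le
  by_contra hy0
  -- `sSup S` is the last point of `[a, b)` where `u ≤ 0`; by `hnear` it lies below `z₁`.
  set S := Icc a z₁ ∩ u ⁻¹' Iic 0
  have hyS : y ∈ S := ⟨⟨hy.1, not_lt.1 fun h => hy0 (hnear y ⟨h.le, hy.2⟩)⟩, not_lt.1 hy0⟩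
  have hz₁b : z₁ < b := max_lt hab hz₀b
  have hSclosed : IsClosed S := (hsol.continuousOn.mono (Icc_subset_Icc_right hz₁b.le))
    |>.preimage_isClosed_of_isClosed isClosed_Icc isClosed_Iic
  have hSbdd : BddAbove S := ⟨z₁, fun t ht => ht.1.2⟩
  have hsS : sSup S ∈ S := hSclosed.csSup_mem ⟨y, hyS⟩ hSbdd
  have hu : ∀ t ∈ Ioo (sSup S) b, 0 ≤ u t := by
    intro t ht
    by_cases htz : t < z₁
    · by_contra hneg
      have htS : t ∈ S := ⟨⟨hsS.1.1.trans ht.1.le, htz.le⟩, (not_le.1 hneg).le⟩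
      exact (le_csSup hSbdd htS).not_gt ht.1
    · exact (hnear t ⟨not_lt.1 htz, ht.2⟩).le
  have := hsol.pos_of_flux_le hcM hc hub ⟨hsS.1.1, hsS.1.2.trans_lt hz₁b⟩ hvb
    (hsol.flux_le_of_nonneg hwell hlam hsS.1.1 hu)
  exact (not_le.2 this) hsS.2

theorem nonneg {y : ℝ} (hy : y ∈ Icc a b) : 0 ≤ u y := by
  rcases hy.2.lt_or_eq with hyb | rfl
  · exact (hsol.pos hcM hc hwell hlam hub hvb y ⟨hy.1, hyb⟩).le
  · exact hub.ge

theorem flux_le {t : ℝ} (ht : t ∈ Icc a b) : v t ≤ v b :=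
  hsol.flux_le_of_nonneg hwell hlam le_rfl
    (fun _ hs => hsol.nonneg hcM hc hwell hlam hub hvb ⟨hs.1.le, hs.2.le⟩) t ht

theorem antitoneOn : AntitoneOn u (Icc a b) := by
  intro y hy z hz hyz
  have := hsol.sub_le_of_flux_le hcM hc hvb.le hy.1 hyz hz.2
    fun t ht => hsol.flux_le hcM hc hwell hlam hub hvb ⟨hy.1.trans ht.1, ht.2.trans hz.2⟩
  have : v b / cM * (z - y) ≤ 0 :=
    mul_nonpos_of_nonpos_of_nonneg (div_nonpos_of_nonpos_of_nonneg hvb.le hcM.le)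
      (sub_nonneg.2 hyz)
  linarith

theorem mul_integral_sq_le {y : ℝ} (hy : y ∈ Icc a b) :
    (c₁ * μ ^ 2 - lam) * ∫ t in y..b, u t ^ 2 ≤ -(u y * v y) := by
  have hyb : Icc y b ⊆ Icc a b := Icc_subset_Icc_left hy.1
  have hcont : ContinuousOn u (Icc y b) := hsol.continuousOn.mono hyb
  have hnn : ∀ t ∈ Icc y b, 0 ≤ u t := fun t ht => hsol.nonneg hcM hc hwell hlam hub hvb (hyb ht)
  have hsq : ∫ t in y..b, u t ^ 2 ≤ u y * ∫ t in y..b, u t := by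
    rw [← intervalIntegral.integral_const_mul]
    refine intervalIntegral.integral_mono_on hy.2 ((hcont.pow 2).intervalIntegrable_of_Icc hy.2)
      ((continuousOn_const.mul hcont).intervalIntegrable_of_Icc hy.2) fun t ht => ?_
    have := hsol.antitoneOn hcM hc hwell hlam hub hvb hy (hyb ht) ht.1
    nlinarith [hnn t ht]
  have hb : b ∈ Icc a b := right_mem_Icc.2 (hy.1.trans hy.2)
  have hW : IntervalIntegrable (fun t => (c t * μ ^ 2 - lam) * u t) volume y b :=
    hsol.2.2.2.2.1.mono_set (uIcc_subset_uIcc (Icc_subset_uIcc hy) (Icc_subset_uIcc hb))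
  have hsource : (c₁ * μ ^ 2 - lam) * ∫ t in y..b, u t ≤ v b - v y := by
    rw [hsol.flux_sub_eq_integral hy hb, ← intervalIntegral.integral_const_mul]
    refine intervalIntegral.integral_mono_ae_restrict hy.2
      ((continuousOn_const.mul hcont).intervalIntegrable_of_Icc hy.2) hW ?_
    filter_upwards [ae_restrict_Icc_of_ae_restrict_Ioo hwell hy.1 le_rfl,
      ae_restrict_mem measurableSet_Icc] with t hct ht
    exact mul_le_mul_of_nonneg_right (by nlinarith [sq_nonneg μ]) (hnn t ht)
  calc (c₁ * μ ^ 2 - lam) * ∫ t in y..b, u t ^ 2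
      ≤ (c₁ * μ ^ 2 - lam) * (u y * ∫ t in y..b, u t) :=
        mul_le_mul_of_nonneg_left hsq (sub_nonneg.2 hlam)
    _ = u y * ((c₁ * μ ^ 2 - lam) * ∫ t in y..b, u t) := by ring
    _ ≤ u y * (v b - v y) := mul_le_mul_of_nonneg_left hsource (hnn y (left_mem_Icc.2 hy.2))
    _ ≤ -(u y * v y) := by nlinarith [hnn y (left_mem_Icc.2 hy.2)]

theorem mul_integral_sub_mul_sq_le (hab : a ≤ b) :
    (c₁ * μ ^ 2 - lam) / cM * ∫ t in a..b, (t - a) * u t ^ 2 ≤ u a ^ 2 / 2 := by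
  have hcont : ContinuousOn u (uIcc a b) := uIcc_of_le hab ▸ hsol.continuousOn
  have hvg : ∀ᵐ t ∂volume.restrict (Ioo a b), v t = c t * g t := hsol.2.2.2.1
  have hpointwise : ∀ᵐ t ∂volume.restrict (Icc a b),
      (c₁ * μ ^ 2 - lam) / cM * ∫ s in t..b, u s ^ 2 ≤ u t * -g t := by
    filter_upwards [ae_restrict_Icc_of_ae_restrict_Ioo (hc.and hvg) le_rfl le_rfl,
      ae_restrict_mem measurableSet_Icc] with t ⟨⟨hct, hctM⟩, hvt⟩ ht
    have henergy := hsol.mul_integral_sq_le hcM hc hwell hlam hub hvb ht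
    have hvt' : v t < 0 := (hsol.flux_le hcM hc hwell hlam hub hvb ht).trans_lt hvb
    have hut := hsol.nonneg hcM hc hwell hlam hub hvb ht
    rw [div_mul_eq_mul_div, div_le_iff₀ hcM]
    nlinarith [mul_nonneg hut (neg_nonneg.2 (nonpos_of_mul_nonpos_right (hvt ▸ hvt'.le) hct))]
  have hlhs : IntervalIntegrable (fun t => (c₁ * μ ^ 2 - lam) / cM * ∫ s in t..b, u s ^ 2)
      volume a b :=
    (continuousOn_const.mul (intervalIntegral.continuousOn_primitive_interval_left
      (hcont.pow 2).integrableOn_uIcc)).intervalIntegrable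
  have hu : ∀ x ∈ uIcc a b, u x = u a + ∫ t in a..x, g t := uIcc_of_le hab ▸ hsol.2.2.1
  calc (c₁ * μ ^ 2 - lam) / cM * ∫ t in a..b, (t - a) * u t ^ 2
      = ∫ t in a..b, (c₁ * μ ^ 2 - lam) / cM * ∫ s in t..b, u s ^ 2 := by
        rw [intervalIntegral.integral_const_mul,
          integral_integral_tail_eq_integral_sub_mul (f := fun t => u t ^ 2)
            (hcont.pow 2).intervalIntegrable]
    _ ≤ ∫ t in a..b, u t * -g t :=
        intervalIntegral.integral_mono_ae_restrict hab hlhs (hsol.1.neg.continuousOn_mul hcont)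
          hpointwise
    _ = u a ^ 2 / 2 := by
        simp only [mul_neg, intervalIntegral.integral_neg,
          integral_mul_eq_sq_sub_sq_of_eq_add_integral hsol.1 hu, hub]
        ring

end NegativeFluxAtRight

end IsReducedSolutionOn

theorem stmt1_general (cm cM H : ℝ) (hcm : 0 < cm) (hcmM : cm < cM)
    (c : ℝ → ℝ) (hc : IsCoeff H cm cM c)
    (β c₁ : ℝ) (hβ0 : 0 ≤ β) (hβH : β < H)
    (hc₁ : cm < c₁)
    (hwell : ∀ᵐ y ∂volume.restrict (Set.Ioo β H), c₁ ≤ c y)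
    (μ lam : ℝ) (hlam : lam < c₁ * μ ^ 2)
    (u v g : ℝ → ℝ) (hsol : IsReducedSolutionOn β H c μ lam u v g)
    (huH : u H = 0) (hvH : v H < 0) :
    (∀ y ∈ Set.Ico β H, 0 < u y) ∧
    2 * (cm / cM) * (μ ^ 2 - lam / c₁) * (∫ σ in β..H, (σ - β) * u σ ^ 2) ≤ u β ^ 2 := by
  have hcM : 0 < cM := hcm.trans hcmM
  have hcoeff : ∀ᵐ t ∂volume.restrict (Ioo β H), 0 < c t ∧ c t ≤ cM :=
    ae_restrict_of_forall_mem measurableSet_Ioo fun t ht =>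
      have hct := hc.2 t ⟨hβ0.trans ht.1.le, ht.2.le⟩
      ⟨hcm.trans_le hct.1, hct.2⟩
  refine ⟨hsol.pos hcM hcoeff hwell hlam.le huH hvH, ?_⟩
  have hbound := hsol.mul_integral_sub_mul_sq_le hcM hcoeff hwell hlam.le huH hvH hβH.le
  have hnonneg : 0 ≤ (c₁ * μ ^ 2 - lam) / cM * ∫ σ in β..H, (σ - β) * u σ ^ 2 :=
    mul_nonneg (div_nonneg (sub_nonneg.2 hlam.le) hcM.le)
      (intervalIntegral.integral_nonneg hβH.le fun σ hσ =>
        mul_nonneg (sub_nonneg.2 hσ.1) (sq_nonneg _))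
  have hc₁pos : 0 < c₁ := hcm.trans hc₁
  calc 2 * (cm / cM) * (μ ^ 2 - lam / c₁) * (∫ σ in β..H, (σ - β) * u σ ^ 2)
      = cm / c₁ * (2 * ((c₁ * μ ^ 2 - lam) / cM * ∫ σ in β..H, (σ - β) * u σ ^ 2)) := by
        field_simp
    _ ≤ 1 * (2 * ((c₁ * μ ^ 2 - lam) / cM * ∫ σ in β..H, (σ - β) * u σ ^ 2)) := by
        gcongr
        exact (div_le_one hc₁pos).2 hc₁.le
    _ ≤ u β ^ 2 := by linarith

/-- positivity and the lower pointwise bound at `β` for a solution on `[β, H]`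
with `u(H) = 0`, `(cu')(H) < 0`, below the well threshold `c₁`. -/
theorem stmt1 (cm cM H : ℝ) (hcm : 0 < cm) (hcmM : cm < cM) (hH : 0 < H)
    (c : ℝ → ℝ) (hc : IsCoeff H cm cM c)
    (β c₁ : ℝ) (hβ0 : 0 ≤ β) (hβH : β < H)
    (hc₁ : cm < c₁) (hc₁' : c₁ ≤ cM)
    (hwell : ∀ᵐ y ∂volume.restrict (Set.Ioo β H), c₁ ≤ c y)
    (μ lam : ℝ) (hμ : 0 < μ) (hlam : lam < c₁ * μ ^ 2)
    (u v g : ℝ → ℝ) (hsol : IsReducedSolutionOn β H c μ lam u v g)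
    (huH : u H = 0) (hvH : v H < 0) :
    (∀ y ∈ Set.Ico β H, 0 < u y) ∧
    2 * (cm / cM) * (μ ^ 2 - lam / c₁) * (∫ σ in β..H, (σ - β) * u σ ^ 2) ≤ u β ^ 2 :=
  stmt1_general cm cM H hcm hcmM c hc β c₁ hβ0 hβH hc₁ hwell μ lam hlam u v g hsol huH hvH
end
end

section
/- Let L > 0, μ > 0, M ≥ 0, and let ρ : [0,L] → ℝ be continuous with |ρ(ξ)| ≤ M for all ξ. Let η : [0,L] → ℝ be twice continuously differentiable with η''(ξ) + μ²η(ξ) = ρ(ξ)η(ξ) for all ξ ∈ [0,L] and η(0) = 0, and set α := η'(0)/μ. Then for every ξ ∈ [0,L], |η(ξ) − α·sin(μξ)| ≤ |α|·(e^{Mξ/μ} − 1); in particular sup_{ξ∈[0,L]} |η(ξ) − α·sin(μξ)| ≤ |α|·(e^{ML/μ} − 1). -/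
/-!
Put `w = η - α sin (μ ·)`, so that `w'' + μ² w = ρ η` and `w(0) = w'(0) = 0`. Removing the free
rotation from the complex amplitude `w' + i μ w` gives `z(ξ) = e^{-iμξ} (w'(ξ) + i μ w(ξ))`, whose
derivative is `e^{-iμξ} ρ(ξ) η(ξ)`: this is the Volterra equation in differential form. Since
`μ |w| ≤ ‖z‖` and `|η| ≤ |w| + |α|`, we get `‖z'‖ ≤ (M/μ) ‖z‖ + M |α|` with `z(0) = 0`, and
Grönwall's inequality gives `‖z(ξ)‖ ≤ μ |α| (e^{Mξ/μ} - 1)`.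
-/

open Set

noncomputable section

section Phasor

open Complex

/-- Constant exactly when `f'' + μ² f = 0`. -/
def phasor (μ : ℝ) (f f' : ℝ → ℝ) (ξ : ℝ) : ℂ :=
  cexp (-(μ * ξ * I)) * (f' ξ + μ * f ξ * I)

theorem norm_cexp_neg_ofReal_mul_ofReal_mul_I (μ ξ : ℝ) : ‖cexp (-(μ * ξ * I))‖ = 1 := by
  simp [norm_exp]

theorem hasDerivAt_phasor {μ ξ : ℝ} {f f' f'' : ℝ → ℝ} (hf : HasDerivAt f (f' ξ) ξ)
    (hf' : HasDerivAt f' (f'' ξ) ξ) :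
    HasDerivAt (phasor μ f f') (cexp (-(μ * ξ * I)) * ↑(f'' ξ + μ ^ 2 * f ξ)) ξ := by
  have hrot : HasDerivAt (fun t : ℝ => cexp (-(μ * t * I))) (cexp (-(μ * ξ * I)) * -(μ * I)) ξ :=
    (((hasDerivAt_id (ξ : ℂ)).const_mul (μ : ℂ)).mul_const I).neg.cexp.comp_ofReal.congr_deriv
      (by simp)
  have hamp : HasDerivAt (fun t : ℝ => (f' t : ℂ) + μ * f t * I) (f'' ξ + μ * f' ξ * I) ξ :=
    hf'.ofReal_comp.add ((hf.ofReal_comp.const_mul (μ : ℂ)).mul_const I)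
  refine (hrot.mul hamp).congr_deriv ?_
  push_cast
  linear_combination (-(μ ^ 2 * f ξ) * cexp (-(μ * ξ * I))) * I_mul_I

theorem abs_mul_le_norm_phasor (μ : ℝ) (f f' : ℝ → ℝ) (ξ : ℝ) :
    |μ * f ξ| ≤ ‖phasor μ f f' ξ‖ := by
  rw [phasor, norm_mul, norm_cexp_neg_ofReal_mul_ofReal_mul_I, one_mul]
  simpa using abs_im_le_norm ((f' ξ : ℂ) + μ * f ξ * I)

theorem gronwallBound_zero_mul (K a x : ℝ) :
    gronwallBound 0 K (K * a) x = a * (Real.exp (K * x) - 1) := by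
  by_cases hK : K = 0
  · simp [gronwallBound_K0, hK]
  · simp [gronwallBound_of_K_ne_0 hK, mul_div_cancel_left₀ _ hK]

theorem abs_le_mul_exp_sub_one_of_abs_add_sq_mul_le {μ K a L : ℝ} (hμ : 0 < μ) (hK : 0 ≤ K)
    {w w' w'' : ℝ → ℝ} (hw : ∀ ξ ∈ Icc 0 L, HasDerivAt w (w' ξ) ξ)
    (hw' : ∀ ξ ∈ Icc 0 L, HasDerivAt w' (w'' ξ) ξ) (h0 : w 0 = 0) (h0' : w' 0 = 0)
    (hforce : ∀ ξ ∈ Icc 0 L, |w'' ξ + μ ^ 2 * w ξ| ≤ K * (|w ξ| + a)) :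
    ∀ ξ ∈ Icc 0 L, |w ξ| ≤ a * (Real.exp (K / μ * ξ) - 1) := by
  have hz := fun ξ (hξ : ξ ∈ Icc 0 L) => hasDerivAt_phasor (μ := μ) (hw ξ hξ) (hw' ξ hξ)
  have hz_le : ∀ ξ ∈ Ico 0 L, ‖cexp (-(μ * ξ * I)) * ↑(w'' ξ + μ ^ 2 * w ξ)‖ ≤
      K / μ * ‖phasor μ w w' ξ‖ + K / μ * (μ * a) := by
    intro ξ hξ
    have hw_le : |w ξ| ≤ ‖phasor μ w w' ξ‖ / μ := by
      rw [le_div_iff₀ hμ, mul_comm, ← abs_of_pos hμ, ← abs_mul, abs_of_pos hμ]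
      exact abs_mul_le_norm_phasor μ w w' ξ
    rw [norm_mul, norm_cexp_neg_ofReal_mul_ofReal_mul_I, one_mul, norm_real, Real.norm_eq_abs]
    calc |w'' ξ + μ ^ 2 * w ξ| ≤ K * (|w ξ| + a) := hforce ξ (Ico_subset_Icc_self hξ)
      _ ≤ K * (‖phasor μ w w' ξ‖ / μ + a) := by gcongr
      _ = K / μ * ‖phasor μ w w' ξ‖ + K / μ * (μ * a) := by field_simp
  intro ξ hξ
  have hgron := norm_le_gronwallBound_of_norm_deriv_right_le (δ := 0)
    (fun x hx => (hz x hx).continuousAt.continuousWithinAt)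
    (fun x hx => (hz x (Ico_subset_Icc_self hx)).hasDerivWithinAt)
    (by simp [phasor, h0, h0']) hz_le ξ hξ
  rw [sub_zero, gronwallBound_zero_mul] at hgron
  have hμw := (abs_mul_le_norm_phasor μ w w' ξ).trans hgron
  rw [abs_mul, abs_of_pos hμ, mul_assoc] at hμw
  exact (mul_le_mul_iff_right₀ hμ).mp hμw

end Phasor

theorem hasDerivAt_const_mul_sin_mul (α μ ξ : ℝ) :
    HasDerivAt (fun t => α * Real.sin (μ * t)) (α * μ * Real.cos (μ * ξ)) ξ :=
  (((hasDerivAt_id ξ).const_mul μ).sin.const_mul α).congr_deriv (by simp only [id]; ring)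

theorem hasDerivAt_const_mul_cos_mul (α μ ξ : ℝ) :
    HasDerivAt (fun t => α * Real.cos (μ * t)) (-(α * μ * Real.sin (μ * ξ))) ξ :=
  (((hasDerivAt_id ξ).const_mul μ).cos.const_mul α).congr_deriv (by simp only [id]; ring)

theorem abs_le_abs_sub_mul_sin_add (x α t : ℝ) : |x| ≤ |x - α * Real.sin t| + |α| := by
  have hsin : |α * Real.sin t| ≤ |α| := by
    rw [abs_mul]
    exact mul_le_of_le_one_right (abs_nonneg α) (Real.abs_sin_le_one t)
  linarith [abs_sub_abs_le_abs_sub x (α * Real.sin t)]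

theorem stmt6_general (L μ M : ℝ) (hμ : 0 < μ) (hM : 0 ≤ M)
    (ρ : ℝ → ℝ)
    (hρ : ∀ ξ ∈ Set.Icc (0 : ℝ) L, |ρ ξ| ≤ M)
    (η η' η'' : ℝ → ℝ)
    (hd1 : ∀ ξ ∈ Set.Icc (0 : ℝ) L, HasDerivAt η (η' ξ) ξ)
    (hd2 : ∀ ξ ∈ Set.Icc (0 : ℝ) L, HasDerivAt η' (η'' ξ) ξ)
    (heq : ∀ ξ ∈ Set.Icc (0 : ℝ) L, η'' ξ + μ ^ 2 * η ξ = ρ ξ * η ξ)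
    (hη0 : η 0 = 0)
    (α : ℝ) (hα : α = η' 0 / μ) :
    (∀ ξ ∈ Set.Icc (0 : ℝ) L,
      |η ξ - α * Real.sin (μ * ξ)| ≤ |α| * (Real.exp (M * ξ / μ) - 1)) ∧
    (∀ ξ ∈ Set.Icc (0 : ℝ) L,
      |η ξ - α * Real.sin (μ * ξ)| ≤ |α| * (Real.exp (M * L / μ) - 1)) := by
  have hforce : ∀ ξ ∈ Icc 0 L, |η'' ξ + α * μ ^ 2 * Real.sin (μ * ξ) +
      μ ^ 2 * (η ξ - α * Real.sin (μ * ξ))| ≤ M * (|η ξ - α * Real.sin (μ * ξ)| + |α|) :=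
    fun ξ hξ => calc
      _ = |ρ ξ| * |η ξ| := by rw [← abs_mul, ← heq ξ hξ]; ring_nf
      _ ≤ M * (|η ξ - α * Real.sin (μ * ξ)| + |α|) := by
        gcongr
        exacts [hρ ξ hξ, abs_le_abs_sub_mul_sin_add _ _ _]
  have hbound : ∀ ξ ∈ Icc 0 L,
      |η ξ - α * Real.sin (μ * ξ)| ≤ |α| * (Real.exp (M * ξ / μ) - 1) := fun ξ hξ => by
    simpa only [div_mul_eq_mul_div, Pi.sub_apply] using abs_le_mul_exp_sub_one_of_abs_add_sq_mul_le hμ hM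
      (fun ξ hξ => (hd1 ξ hξ).sub (hasDerivAt_const_mul_sin_mul α μ ξ))
      (fun ξ hξ => ((hd2 ξ hξ).sub (hasDerivAt_const_mul_cos_mul (α * μ) μ ξ)).congr_deriv
        (by ring))
      (by simp [hη0]) (by simp [hα, hμ.ne']) hforce ξ hξ
  refine ⟨hbound, fun ξ hξ => (hbound ξ hξ).trans ?_⟩
  gcongr
  exact hξ.2

/-- the Volterra/Gronwall perturbation estimate
`|η(ξ) - α sin(μξ)| ≤ |α|(e^{Mξ/μ} - 1)` for solutions of `η'' + μ²η = ρη`, `η(0) = 0`,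
with `α = η'(0)/μ`. -/
theorem stmt6 (L μ M : ℝ) (hL : 0 < L) (hμ : 0 < μ) (hM : 0 ≤ M)
    (ρ : ℝ → ℝ) (hρc : ContinuousOn ρ (Set.Icc 0 L))
    (hρ : ∀ ξ ∈ Set.Icc (0 : ℝ) L, |ρ ξ| ≤ M)
    (η η' η'' : ℝ → ℝ)
    (hd1 : ∀ ξ ∈ Set.Icc (0 : ℝ) L, HasDerivAt η (η' ξ) ξ)
    (hd2 : ∀ ξ ∈ Set.Icc (0 : ℝ) L, HasDerivAt η' (η'' ξ) ξ)
    (hd2c : ContinuousOn η'' (Set.Icc 0 L))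
    (heq : ∀ ξ ∈ Set.Icc (0 : ℝ) L, η'' ξ + μ ^ 2 * η ξ = ρ ξ * η ξ)
    (hη0 : η 0 = 0)
    (α : ℝ) (hα : α = η' 0 / μ) :
    (∀ ξ ∈ Set.Icc (0 : ℝ) L,
      |η ξ - α * Real.sin (μ * ξ)| ≤ |α| * (Real.exp (M * ξ / μ) - 1)) ∧
    (∀ ξ ∈ Set.Icc (0 : ℝ) L,
      |η ξ - α * Real.sin (μ * ξ)| ≤ |α| * (Real.exp (M * L / μ) - 1)) :=
  stmt6_general L μ M hμ hM ρ hρ η η' η'' hd1 hd2 heq hη0 α hα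
end
end

section
/- Let T > 0 and let w : [0,T] → ℝ be a convex function with w(0) = w(T) = 0 and w(t) ≤ 0 for all t ∈ [0,T]. Let m := max_{t∈[0,T]} |w(t)|. Then ∫₀^T w(t)² dt ≥ m² T / 3. -/
/-!
By convexity, `w` lies below the chord joining any two points of its graph. Let `t₀` be a point
where `w t₀ = -m`; on `[0, t₀]` and on `[t₀, T]` the function `w` is then below the chords to
`(t₀, -m)`, which are nonpositive, so `w²` dominates their squares. A chord with end values `p, q`
over an interval of length `L` has `∫ ℓ² = L (p² + p q + q²) / 3`, and here this gives
`m² t₀ / 3 + m² (T - t₀) / 3 = m² T / 3`.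
-/

open Set MeasureTheory

theorem ConvexOn.mul_le_chord {𝕜 : Type*} [Field 𝕜] [LinearOrder 𝕜] [IsStrictOrderedRing 𝕜]
    {s : Set 𝕜} {f : 𝕜 → 𝕜} {a b t : 𝕜} (hf : ConvexOn 𝕜 s f) (ha : a ∈ s) (hb : b ∈ s)
    (ht : t ∈ Icc a b) : (b - a) * f t ≤ (b - t) * f a + (t - a) * f b := by
  rcases ht.1.eq_or_lt with rfl | hat
  · simp
  rcases ht.2.eq_or_lt with rfl | htb
  · simp
  exact hf.secant_mono_aux1 ha hb hat htb

theorem integral_sq_chord (a b p q : ℝ) :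
    ∫ t in a..b, (((b - t) * p + (t - a) * q) / (b - a)) ^ 2 =
      (b - a) * (p ^ 2 + p * q + q ^ 2) / 3 := by
  rcases eq_or_ne a b with rfl | hab
  · simp
  have hba : b - a ≠ 0 := sub_ne_zero.2 hab.symm
  set c := (b * p - a * q) / (b - a) with hc
  set s := (q - p) / (b - a) with hs
  have hpoly : ∀ t, (((b - t) * p + (t - a) * q) / (b - a)) ^ 2 =
      c ^ 2 + t * (2 * c * s) + t ^ 2 * s ^ 2 := by
    intro t
    rw [hc, hs]
    field_simp
    ring
  simp only [hpoly]
  rw [intervalIntegral.integral_add, intervalIntegral.integral_add]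
  · simp only [intervalIntegral.integral_const, intervalIntegral.integral_mul_const, integral_id,
      integral_pow, smul_eq_mul]
    rw [hc, hs]
    field_simp
    ring
  all_goals
    apply Continuous.intervalIntegrable
    fun_prop

theorem ConvexOn.intervalIntegrable_sq {f : ℝ → ℝ} {a b C : ℝ} (hab : a ≤ b)
    (hf : ConvexOn ℝ (Icc a b) f) (hC : ∀ t ∈ Icc a b, |f t| ≤ C) :
    IntervalIntegrable (fun t => f t ^ 2) volume a b := by
  have hcont : ContinuousOn f (Ioo a b) := by
    simpa only [interior_Icc] using hf.continuousOn_interior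
  rw [intervalIntegrable_iff_integrableOn_Ioc_of_le hab]
  refine IntegrableOn.congr_set_ae ?_ Ioo_ae_eq_Ioc.symm
  refine ⟨(hcont.pow 2).aestronglyMeasurable measurableSet_Ioo,
    HasFiniteIntegral.restrict_of_bounded (C := C ^ 2) measure_Ioo_lt_top ?_⟩
  filter_upwards [ae_restrict_mem measurableSet_Ioo] with t ht
  rw [Real.norm_eq_abs, abs_pow, sq_abs]
  exact sq_le_sq' (abs_le.1 (hC t (Ioo_subset_Icc_self ht))).1
    (abs_le.1 (hC t (Ioo_subset_Icc_self ht))).2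

theorem ConvexOn.integral_sq_ge {f : ℝ → ℝ} {a b : ℝ} (hab : a ≤ b)
    (hf : ConvexOn ℝ (Icc a b) f) (ha : f a ≤ 0) (hb : f b ≤ 0)
    (hint : IntervalIntegrable (fun t => f t ^ 2) volume a b) :
    (b - a) * (f a ^ 2 + f a * f b + f b ^ 2) / 3 ≤ ∫ t in a..b, f t ^ 2 := by
  rcases hab.eq_or_lt with rfl | hlt
  · simp
  rw [← integral_sq_chord]
  refine intervalIntegral.integral_mono_on hab
    (Continuous.intervalIntegrable (by fun_prop) a b) hint ?_
  intro t ht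
  have hchord := hf.mul_le_chord (left_mem_Icc.2 hab) (right_mem_Icc.2 hab) ht
  have hba : 0 < b - a := sub_pos.2 hlt
  have hchord_nonpos : (b - t) * f a + (t - a) * f b ≤ 0 := by
    nlinarith [ht.1, ht.2]
  have hle : f t ≤ ((b - t) * f a + (t - a) * f b) / (b - a) := by
    rw [le_div_iff₀ hba]
    linarith
  rw [← neg_sq, ← neg_sq (f t)]
  exact pow_le_pow_left₀ (neg_nonneg.2 (div_nonpos_of_nonpos_of_nonneg hchord_nonpos hba.le))
    (neg_le_neg hle) 2

theorem stmt8_general (T : ℝ) (w : ℝ → ℝ)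
    (hconv : ConvexOn ℝ (Set.Icc 0 T) w)
    (hw0 : w 0 = 0) (hwT : w T = 0)
    (hneg : ∀ t ∈ Set.Icc (0 : ℝ) T, w t ≤ 0)
    (m : ℝ) (hm : IsGreatest ((fun t => |w t|) '' Set.Icc (0 : ℝ) T) m) :
    m ^ 2 * T / 3 ≤ ∫ t in (0:ℝ)..T, w t ^ 2 := by
  obtain ⟨⟨t₀, ht₀, hwt₀⟩, hub⟩ := hm
  have hwt₀_sq : w t₀ ^ 2 = m ^ 2 := by rw [← hwt₀, sq_abs]
  have hbound : ∀ t ∈ Icc 0 T, |w t| ≤ m := fun t ht => hub ⟨t, ht, rfl⟩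
  have hleft : ConvexOn ℝ (Icc 0 t₀) w :=
    hconv.subset (Icc_subset_Icc_right ht₀.2) (convex_Icc _ _)
  have hright : ConvexOn ℝ (Icc t₀ T) w :=
    hconv.subset (Icc_subset_Icc_left ht₀.1) (convex_Icc _ _)
  have hint₁ := hleft.intervalIntegrable_sq ht₀.1
    fun t ht => hbound t (Icc_subset_Icc_right ht₀.2 ht)
  have hint₂ := hright.intervalIntegrable_sq ht₀.2
    fun t ht => hbound t (Icc_subset_Icc_left ht₀.1 ht)
  have h₁ := hleft.integral_sq_ge ht₀.1 hw0.le (hneg t₀ ht₀) hint₁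
  have h₂ := hright.integral_sq_ge ht₀.2 (hneg t₀ ht₀) hwT.le hint₂
  rw [hw0, hwt₀_sq] at h₁
  rw [hwT, hwt₀_sq] at h₂
  rw [← intervalIntegral.integral_add_adjacent_intervals hint₁ hint₂]
  linear_combination h₁ + h₂

/-- for a nonpositive convex arch `w` on `[0,T]` vanishing at the endpoints,
with maximal amplitude `m = max |w|`, one has `∫₀^T w² ≥ m²T/3`. -/
theorem stmt8 (T : ℝ) (hT : 0 < T) (w : ℝ → ℝ)
    (hconv : ConvexOn ℝ (Set.Icc 0 T) w)
    (hw0 : w 0 = 0) (hwT : w T = 0)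
    (hneg : ∀ t ∈ Set.Icc (0 : ℝ) T, w t ≤ 0)
    (m : ℝ) (hm : IsGreatest ((fun t => |w t|) '' Set.Icc (0 : ℝ) T) m) :
    m ^ 2 * T / 3 ≤ ∫ t in (0:ℝ)..T, w t ^ 2 :=
  stmt8_general T w hconv hw0 hwT hneg m hm
end

section
/- (Minimal amplitude implies non-concentration.) Fix ε > 0, r > 0 and an interval (a,b) ⊆ (0,H) with a < b. Then there exist λ₀ > 0 depending only on ε, c_m, c_M, b − a, and d > 0 depending only on ε, c_m, c_M, b − a, r, such that: for every coefficient c, every μ > 0 and every λ > λ₀ with λ ≥ (c_M + ε)μ², every normalized Dirichlet solution u (with flux v) of the reduced problem that satisfies u(y)² + v(y)² ≥ r² for all y ∈ [0,H] also satisfies ∫_a^b u(y)² dy ≥ d. -/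
open MeasureTheory Set Filter Topology

set_option maxHeartbeats 1000000

noncomputable section


private lemma intIntMono {p q p' q' : ℝ} {f : ℝ → ℝ} (hf : IntervalIntegrable f volume p q)
    (hpq : p ≤ q) (h1 : p ≤ p') (h12 : p' ≤ q') (h2 : q' ≤ q) :
    IntervalIntegrable f volume p' q' :=
  hf.mono_set (by rw [Set.uIcc_of_le h12, Set.uIcc_of_le hpq]; exact Set.Icc_subset_Icc h1 h2)

private lemma primitive_sub {p q : ℝ} {G U : ℝ → ℝ}
    (hGi : IntervalIntegrable G volume p q)
    (hU : ∀ y ∈ Set.Icc p q, U y = U p + ∫ t in p..y, G t)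
    {y₁ y₂ : ℝ} (h₁ : y₁ ∈ Set.Icc p q) (h₂ : y₂ ∈ Set.Icc p q) :
    U y₂ - U y₁ = ∫ t in y₁..y₂, G t := by
  have hpq : p ≤ q := h₁.1.trans h₁.2
  have i₁ : IntervalIntegrable G volume p y₁ := intIntMono hGi hpq le_rfl h₁.1 h₁.2
  have i₂ : IntervalIntegrable G volume p y₂ := intIntMono hGi hpq le_rfl h₂.1 h₂.2
  have := intervalIntegral.integral_interval_sub_left i₂ i₁
  rw [hU y₁ h₁, hU y₂ h₂]
  linarith

private lemma primitive_continuousOn {p q : ℝ} {G U : ℝ → ℝ} (hpq : p ≤ q)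
    (hGi : IntervalIntegrable G volume p q)
    (hU : ∀ y ∈ Set.Icc p q, U y = U p + ∫ t in p..y, G t) :
    ContinuousOn U (Set.Icc p q) := by
  have h1 : ContinuousOn (fun y => ∫ t in p..y, G t) (Set.Icc p q) := by
    have := intervalIntegral.continuousOn_primitive_interval' hGi
      (by rw [Set.uIcc_of_le hpq]; exact Set.left_mem_Icc.2 hpq)
    rwa [Set.uIcc_of_le hpq] at this
  exact (continuousOn_const.add h1).congr fun y hy => hU y hy

private lemma ae_mono_Icc {p q p' q' : ℝ} (h1 : p ≤ p') (h2 : q' ≤ q) {P : ℝ → Prop}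
    (h : ∀ᵐ t ∂volume.restrict (Set.Ioo p q), P t) :
    ∀ᵐ t ∂volume.restrict (Set.Icc p' q'), P t := by
  have h' : ∀ᵐ t ∂volume.restrict (Set.Ioo p' q'), P t :=
    ae_restrict_of_ae_restrict_of_subset (Set.Ioo_subset_Ioo h1 h2) h
  rwa [Measure.restrict_congr_set Ioo_ae_eq_Icc] at h'

private lemma primitive_mono {p q : ℝ} {G U : ℝ → ℝ}
    (hGi : IntervalIntegrable G volume p q)
    (hU : ∀ y ∈ Set.Icc p q, U y = U p + ∫ t in p..y, G t)
    (hG0 : ∀ᵐ t ∂volume.restrict (Set.Ioo p q), 0 ≤ G t)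
    {y₁ y₂ : ℝ} (h₁ : y₁ ∈ Set.Icc p q) (h₂ : y₂ ∈ Set.Icc p q) (h12 : y₁ ≤ y₂) :
    U y₁ ≤ U y₂ := by
  have hs := primitive_sub hGi hU h₁ h₂
  have h0 : 0 ≤ ∫ t in y₁..y₂, G t :=
    intervalIntegral.integral_nonneg_of_ae_restrict h12 (ae_mono_Icc h₁.1 h₂.2 hG0)
  linarith

private lemma cont_intervalIntegrable {p q p' q' : ℝ} {f : ℝ → ℝ}
    (hf : ContinuousOn f (Set.Icc p q)) (h1 : p ≤ p') (h12 : p' ≤ q') (h2 : q' ≤ q) :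
    IntervalIntegrable f volume p' q' := by
  have hsub : Set.uIcc p' q' ⊆ Set.Icc p q := by
    rw [Set.uIcc_of_le h12]; exact Set.Icc_subset_Icc h1 h2
  exact (hf.mono hsub).intervalIntegrable

private lemma coreA {p q K1 K2 CM : ℝ} {U V G F : ℝ → ℝ}
    (hpq : p < q) (hK1 : 0 < K1) (hK12 : K1 ≤ K2) (hCM : 0 < CM)
    (hGi : IntervalIntegrable G volume p q) (hFi : IntervalIntegrable F volume p q)
    (hU : ∀ y ∈ Set.Icc p q, U y = U p + ∫ t in p..y, G t)
    (hV : ∀ y ∈ Set.Icc p q, V y = V p + ∫ t in p..y, F t)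
    (hUpos : ∀ y ∈ Set.Icc p q, 0 ≤ U y)
    (hVpos : ∀ y ∈ Set.Icc p q, 0 < V y)
    (hG : ∀ᵐ t ∂volume.restrict (Set.Ioo p q), V t / CM ≤ G t)
    (hFq : ∀ t ∈ Set.Icc p q, ∃ e, K1 ≤ e ∧ e ≤ K2 ∧ F t = -(e * U t)) :
    (q - p) ^ 2 * K1 ^ 2 ≤ 16 * CM * K2 := by
  have hpq' : p ≤ q := hpq.le
  have hK2 : 0 < K2 := hK1.trans_le hK12
  set m : ℝ := (p + q) / 2 with hm
  have hpm : p ≤ m := by rw [hm]; linarith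
  have hmq : m ≤ q := by rw [hm]; linarith
  have hmmem : m ∈ Set.Icc p q := ⟨hpm, hmq⟩
  have hFle : ∀ t ∈ Set.Icc p q, F t ≤ -(K1 * U t) := by
    intro t ht
    obtain ⟨e, he1, he2, he3⟩ := hFq t ht
    have hu0 := hUpos t ht
    have := mul_le_mul_of_nonneg_right he1 hu0
    rw [he3]; linarith
  have hFge : ∀ t ∈ Set.Icc p q, -(K2 * U t) ≤ F t := by
    intro t ht
    obtain ⟨e, he1, he2, he3⟩ := hFq t ht
    have hu0 := hUpos t ht
    have := mul_le_mul_of_nonneg_right he2 hu0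
    rw [he3]; linarith
  have hG0 : ∀ᵐ t ∂volume.restrict (Set.Ioo p q), 0 ≤ G t := by
    filter_upwards [hG, ae_restrict_mem measurableSet_Ioo] with t h1 h2
    have hv := hVpos t ⟨h2.1.le, h2.2.le⟩
    have : 0 ≤ V t / CM := by positivity
    linarith
  have hUmono : ∀ ⦃y₁ y₂ : ℝ⦄, y₁ ∈ Set.Icc p q → y₂ ∈ Set.Icc p q → y₁ ≤ y₂ → U y₁ ≤ U y₂ :=
    fun y₁ y₂ h₁ h₂ h12 => primitive_mono hGi hU hG0 h₁ h₂ h12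
  have hUc : ContinuousOn U (Set.Icc p q) := primitive_continuousOn hpq' hGi hU
  have hVc : ContinuousOn V (Set.Icc p q) := primitive_continuousOn hpq' hFi hV
  set T : ℝ := q - p with hT
  have hTpos : 0 < T := by rw [hT]; linarith
  have hUm0 : 0 ≤ U m := hUpos m hmmem
  have hVm : 0 < V m := hVpos m hmmem
  have hVp : 0 < V p := hVpos p ⟨le_rfl, hpq'⟩
  have hqm : q - m = T / 2 := by rw [hm, hT]; ring
  -- Step 1 : K1 * (T/2) * U m ≤ V m
  have step1 : K1 * (T / 2) * U m ≤ V m := by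
    have e1 : V q - V m = ∫ t in m..q, F t :=
      primitive_sub hFi hV hmmem (Set.right_mem_Icc.2 hpq')
    have i1 : IntervalIntegrable F volume m q := intIntMono hFi hpq' hpm hmq le_rfl
    have i1n : IntervalIntegrable (fun t => -F t) volume m q := i1.neg
    have iU0 : IntervalIntegrable U volume m q := cont_intervalIntegrable hUc hpm hmq le_rfl
    have iU : IntervalIntegrable (fun t => K1 * U t) volume m q := iU0.const_mul K1
    have c1 : ∫ _t in m..q, (K1 * U m) ≤ ∫ t in m..q, K1 * U t := by
      apply intervalIntegral.integral_mono_on hmq intervalIntegrable_const iU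
      intro t ht
      exact mul_le_mul_of_nonneg_left (hUmono hmmem ⟨hpm.trans ht.1, ht.2⟩ ht.1) hK1.le
    have c2 : ∫ t in m..q, K1 * U t ≤ ∫ t in m..q, -F t := by
      apply intervalIntegral.integral_mono_on hmq iU i1n
      intro t ht
      have := hFle t ⟨hpm.trans ht.1, ht.2⟩
      linarith
    have c3 : ∫ t in m..q, -F t = -(V q - V m) := by
      rw [intervalIntegral.integral_neg, ← e1]
    have c4 : 0 < V q := hVpos q (Set.right_mem_Icc.2 hpq')
    have c5 : (∫ _t in m..q, (K1 * U m) : ℝ) = (q - m) * (K1 * U m) := by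
      rw [intervalIntegral.integral_const, smul_eq_mul]
    rw [c5, hqm] at c1
    have : T / 2 * (K1 * U m) ≤ V m := by linarith
    linarith [this]
  -- V is decreasing from p to m : V m ≤ V p
  have hVmp : V m ≤ V p := by
    have e := primitive_sub hFi hV (Set.left_mem_Icc.2 hpq') hmmem
    have i1 : IntervalIntegrable F volume p m := intIntMono hFi hpq' le_rfl hpm hmq
    have hle : ∫ t in p..m, F t ≤ ∫ _t in p..m, (0:ℝ) := by
      apply intervalIntegral.integral_mono_on hpm i1 intervalIntegrable_const
      intro t ht
      have h1 := hFle t ⟨ht.1, ht.2.trans hmq⟩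
      have h2 := hUpos t ⟨ht.1, ht.2.trans hmq⟩
      nlinarith [mul_nonneg hK1.le h2]
    simp only [intervalIntegral.integral_const, smul_eq_mul, mul_zero] at hle
    linarith
  set y₁ : ℝ := p + K1 * T / (4 * K2) with hy₁
  have hy₁p : p < y₁ := by
    have : 0 < K1 * T / (4 * K2) := by positivity
    rw [hy₁]; linarith
  have h5 : K2 * (K1 * T / (4 * K2)) = K1 * T / 4 := by field_simp
  have hy₁m : y₁ ≤ m := by
    have h6 : K1 * T / (4 * K2) ≤ T / 2 := by
      rw [div_le_div_iff₀ (by positivity) (by norm_num : (0:ℝ) < 2)]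
      nlinarith
    have hmeq : m = p + T / 2 := by rw [hm, hT]; ring
    rw [hy₁, hmeq]; linarith
  have hy₁mem : y₁ ∈ Set.Icc p q := ⟨hy₁p.le, hy₁m.trans hmq⟩
  -- Step 3 : V ≥ V p / 2 on [p, y₁]
  have step3 : ∀ y ∈ Set.Icc p y₁, V p / 2 ≤ V y := by
    intro y hy
    have hyq : y ≤ q := hy.2.trans hy₁mem.2
    have hymem : y ∈ Set.Icc p q := ⟨hy.1, hyq⟩
    have e : V y - V p = ∫ t in p..y, F t :=
      primitive_sub hFi hV (Set.left_mem_Icc.2 hpq') hymem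
    have i1 : IntervalIntegrable F volume p y := intIntMono hFi hpq' le_rfl hy.1 hyq
    have c1 : ∫ _t in p..y, (-(K2 * U m)) ≤ ∫ t in p..y, F t := by
      apply intervalIntegral.integral_mono_on hy.1 intervalIntegrable_const i1
      intro t ht
      have htm : t ∈ Set.Icc p q := ⟨ht.1, ht.2.trans hyq⟩
      have h1 := hFge t htm
      have h2 : U t ≤ U m := hUmono htm hmmem (ht.2.trans (hy.2.trans hy₁m))
      have := mul_le_mul_of_nonneg_left h2 hK2.le
      linarith
    have c2 : (∫ _t in p..y, (-(K2 * U m)) : ℝ) = (y - p) * (-(K2 * U m)) := by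
      rw [intervalIntegral.integral_const, smul_eq_mul]
    have h3 : y - p ≤ K1 * T / (4 * K2) := by
      have := hy.2; rw [hy₁] at this; linarith
    have h6 : K2 * (y - p) ≤ K1 * T / 4 := by
      have := mul_le_mul_of_nonneg_left h3 hK2.le
      linarith [this, h5]
    have h4 : K2 * (y - p) * U m ≤ K1 * T / 4 * U m := mul_le_mul_of_nonneg_right h6 hUm0
    have h7 : K1 * T / 4 * U m ≤ V p / 2 := by linarith [step1, hVmp]
    rw [c2] at c1
    linarith [c1, h4, h7]
  -- Step 4
  have step4 : (y₁ - p) * (V p / 2 / CM) ≤ U y₁ := by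
    have e : U y₁ - U p = ∫ t in p..y₁, G t :=
      primitive_sub hGi hU (Set.left_mem_Icc.2 hpq') hy₁mem
    have iG : IntervalIntegrable G volume p y₁ := intIntMono hGi hpq' le_rfl hy₁p.le hy₁mem.2
    have iV : IntervalIntegrable (fun t => V t / CM) volume p y₁ :=
      cont_intervalIntegrable (hVc.div_const CM) le_rfl hy₁p.le hy₁mem.2
    have c1 : ∫ t in p..y₁, V t / CM ≤ ∫ t in p..y₁, G t := by
      apply intervalIntegral.integral_mono_ae_restrict hy₁p.le iV iG
      exact ae_mono_Icc le_rfl hy₁mem.2 hG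
    have c2 : ∫ _t in p..y₁, (V p / 2 / CM) ≤ ∫ t in p..y₁, V t / CM := by
      apply intervalIntegral.integral_mono_on hy₁p.le intervalIntegrable_const iV
      intro t ht
      have := step3 t ht
      gcongr
    have c3 : (∫ _t in p..y₁, (V p / 2 / CM) : ℝ) = (y₁ - p) * (V p / 2 / CM) := by
      rw [intervalIntegral.integral_const, smul_eq_mul]
    have hUp : 0 ≤ U p := hUpos p ⟨le_rfl, hpq'⟩
    linarith [c1, c2, c3, e, hUp]
  -- combine
  have hy₁sub : y₁ - p = K1 * T / (4 * K2) := by rw [hy₁]; ring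
  have key1 : K1 * T / (4 * K2) * (V p / 2 / CM) ≤ U m := by
    rw [← hy₁sub]
    exact le_trans step4 (hUmono hy₁mem hmmem hy₁m)
  have key2 : K1 * (T / 2) * U m ≤ V p := step1.trans hVmp
  have key3 : K1 * (T / 2) * (K1 * T / (4 * K2) * (V p / 2 / CM)) ≤ K1 * (T / 2) * U m :=
    mul_le_mul_of_nonneg_left key1 (by positivity)
  have e2 : K1 * (T / 2) * (K1 * T / (4 * K2) * (V p / 2 / CM))
      = T ^ 2 * K1 ^ 2 * V p / (16 * K2 * CM) := by
    field_simp; ring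
  have key4 : T ^ 2 * K1 ^ 2 * V p / (16 * K2 * CM) ≤ V p := by
    rw [← e2]; linarith
  rw [div_le_iff₀ (by positivity : (0:ℝ) < 16 * K2 * CM)] at key4
  nlinarith [key4, hVp]

private lemma coreB {p q K1 K2 CM : ℝ} {U V G F : ℝ → ℝ}
    (hpq : p < q) (hK1 : 0 < K1) (hK12 : K1 ≤ K2) (hCM : 0 < CM)
    (hGi : IntervalIntegrable G volume p q) (hFi : IntervalIntegrable F volume p q)
    (hU : ∀ y ∈ Set.Icc p q, U y = U p + ∫ t in p..y, G t)
    (hV : ∀ y ∈ Set.Icc p q, V y = V p + ∫ t in p..y, F t)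
    (hUneg : ∀ y ∈ Set.Icc p q, U y ≤ 0)
    (hVpos : ∀ y ∈ Set.Icc p q, 0 < V y)
    (hG : ∀ᵐ t ∂volume.restrict (Set.Ioo p q), V t / CM ≤ G t)
    (hFq : ∀ t ∈ Set.Icc p q, ∃ e, K1 ≤ e ∧ e ≤ K2 ∧ F t = -(e * U t)) :
    (q - p) ^ 2 * K1 ^ 2 ≤ 16 * CM * K2 := by
  have hpq' : p ≤ q := hpq.le
  have hK2 : 0 < K2 := hK1.trans_le hK12
  set m : ℝ := (p + q) / 2 with hm
  have hpm : p ≤ m := by rw [hm]; linarith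
  have hmq : m ≤ q := by rw [hm]; linarith
  have hmmem : m ∈ Set.Icc p q := ⟨hpm, hmq⟩
  -- pointwise bounds on F (note U ≤ 0 so F ≥ 0)
  have hFge : ∀ t ∈ Set.Icc p q, -(K1 * U t) ≤ F t := by
    intro t ht
    obtain ⟨e, he1, he2, he3⟩ := hFq t ht
    have hu0 := hUneg t ht
    have := mul_le_mul_of_nonpos_right he1 hu0
    rw [he3]; linarith
  have hFle : ∀ t ∈ Set.Icc p q, F t ≤ -(K2 * U t) := by
    intro t ht
    obtain ⟨e, he1, he2, he3⟩ := hFq t ht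
    have hu0 := hUneg t ht
    have := mul_le_mul_of_nonpos_right he2 hu0
    rw [he3]; linarith
  have hG0 : ∀ᵐ t ∂volume.restrict (Set.Ioo p q), 0 ≤ G t := by
    filter_upwards [hG, ae_restrict_mem measurableSet_Ioo] with t h1 h2
    have hv := hVpos t ⟨h2.1.le, h2.2.le⟩
    have : 0 ≤ V t / CM := by positivity
    linarith
  have hUmono : ∀ ⦃y₁ y₂ : ℝ⦄, y₁ ∈ Set.Icc p q → y₂ ∈ Set.Icc p q → y₁ ≤ y₂ → U y₁ ≤ U y₂ :=
    fun y₁ y₂ h₁ h₂ h12 => primitive_mono hGi hU hG0 h₁ h₂ h12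
  have hUc : ContinuousOn U (Set.Icc p q) := primitive_continuousOn hpq' hGi hU
  have hVc : ContinuousOn V (Set.Icc p q) := primitive_continuousOn hpq' hFi hV
  set T : ℝ := q - p with hT
  have hTpos : 0 < T := by rw [hT]; linarith
  have hUm0 : U m ≤ 0 := hUneg m hmmem
  have hVm : 0 < V m := hVpos m hmmem
  have hVp : 0 < V p := hVpos p ⟨le_rfl, hpq'⟩
  have hVq : 0 < V q := hVpos q (Set.right_mem_Icc.2 hpq')
  have hmp : m - p = T / 2 := by rw [hm, hT]; ring
  -- V increasing : V m ≤ V q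
  have hVmq : V m ≤ V q := by
    have e := primitive_sub hFi hV hmmem (Set.right_mem_Icc.2 hpq')
    have i1 : IntervalIntegrable F volume m q := intIntMono hFi hpq' hpm hmq le_rfl
    have hle : ∫ _t in m..q, (0:ℝ) ≤ ∫ t in m..q, F t := by
      apply intervalIntegral.integral_mono_on hmq intervalIntegrable_const i1
      intro t ht
      have h1 := hFge t ⟨hpm.trans ht.1, ht.2⟩
      have h2 := hUneg t ⟨hpm.trans ht.1, ht.2⟩
      nlinarith [mul_nonpos_of_nonneg_of_nonpos hK1.le h2]
    simp only [intervalIntegral.integral_const, smul_eq_mul, mul_zero] at hle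
    linarith
  -- Step 1' : K1 * (T/2) * (-U m) ≤ V q
  have step1 : K1 * (T / 2) * (-U m) ≤ V q := by
    have e1 : V m - V p = ∫ t in p..m, F t :=
      primitive_sub hFi hV (Set.left_mem_Icc.2 hpq') hmmem
    have i1 : IntervalIntegrable F volume p m := intIntMono hFi hpq' le_rfl hpm hmq
    have c1 : ∫ _t in p..m, (-(K1 * U m)) ≤ ∫ t in p..m, F t := by
      apply intervalIntegral.integral_mono_on hpm intervalIntegrable_const i1
      intro t ht
      have htm : t ∈ Set.Icc p q := ⟨ht.1, ht.2.trans hmq⟩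
      have h1 := hFge t htm
      have h2 : U t ≤ U m := hUmono htm hmmem ht.2
      have := mul_le_mul_of_nonneg_left h2 hK1.le
      linarith
    have c5 : (∫ _t in p..m, (-(K1 * U m)) : ℝ) = (m - p) * (-(K1 * U m)) := by
      rw [intervalIntegral.integral_const, smul_eq_mul]
    rw [c5, hmp] at c1
    linarith [c1, hVp, hVmq]
  set y₁ : ℝ := q - K1 * T / (4 * K2) with hy₁
  have hy₁q : y₁ < q := by
    have : 0 < K1 * T / (4 * K2) := by positivity
    rw [hy₁]; linarith
  have h5 : K2 * (K1 * T / (4 * K2)) = K1 * T / 4 := by field_simp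
  have hy₁m : m ≤ y₁ := by
    have h6 : K1 * T / (4 * K2) ≤ T / 2 := by
      rw [div_le_div_iff₀ (by positivity) (by norm_num : (0:ℝ) < 2)]
      nlinarith
    have hmeq : m = q - T / 2 := by rw [hm, hT]; ring
    rw [hy₁, hmeq]; linarith
  have hy₁mem : y₁ ∈ Set.Icc p q := ⟨hpm.trans hy₁m, hy₁q.le⟩
  -- Step 3' : V ≥ V q / 2 on [y₁, q]
  have step3 : ∀ y ∈ Set.Icc y₁ q, V q / 2 ≤ V y := by
    intro y hy
    have hpy : p ≤ y := hy₁mem.1.trans hy.1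
    have hymem : y ∈ Set.Icc p q := ⟨hpy, hy.2⟩
    have e : V q - V y = ∫ t in y..q, F t :=
      primitive_sub hFi hV hymem (Set.right_mem_Icc.2 hpq')
    have i1 : IntervalIntegrable F volume y q := intIntMono hFi hpq' hpy hy.2 le_rfl
    have c1 : ∫ t in y..q, F t ≤ ∫ _t in y..q, (-(K2 * U m)) := by
      apply intervalIntegral.integral_mono_on hy.2 i1 intervalIntegrable_const
      intro t ht
      have htm : t ∈ Set.Icc p q := ⟨hpy.trans ht.1, ht.2⟩
      have h1 := hFle t htm
      have h2 : U m ≤ U t := hUmono hmmem htm ((hy₁m.trans hy.1).trans ht.1)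
      have := mul_le_mul_of_nonneg_left h2 hK2.le
      linarith
    have c2 : (∫ _t in y..q, (-(K2 * U m)) : ℝ) = (q - y) * (-(K2 * U m)) := by
      rw [intervalIntegral.integral_const, smul_eq_mul]
    have h3 : q - y ≤ K1 * T / (4 * K2) := by
      have := hy.1; rw [hy₁] at this; linarith
    have h6 : K2 * (q - y) ≤ K1 * T / 4 := by
      have := mul_le_mul_of_nonneg_left h3 hK2.le
      linarith [this, h5]
    have h4 : K2 * (q - y) * (-U m) ≤ K1 * T / 4 * (-U m) :=
      mul_le_mul_of_nonneg_right h6 (by linarith)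
    have h7 : K1 * T / 4 * (-U m) ≤ V q / 2 := by linarith [step1]
    rw [c2] at c1
    linarith [c1, h4, h7]
  -- Step 4'
  have step4 : (q - y₁) * (V q / 2 / CM) ≤ -U y₁ := by
    have e : U q - U y₁ = ∫ t in y₁..q, G t :=
      primitive_sub hGi hU hy₁mem (Set.right_mem_Icc.2 hpq')
    have iG : IntervalIntegrable G volume y₁ q := intIntMono hGi hpq' hy₁mem.1 hy₁q.le le_rfl
    have iV : IntervalIntegrable (fun t => V t / CM) volume y₁ q :=
      cont_intervalIntegrable (hVc.div_const CM) hy₁mem.1 hy₁q.le le_rfl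
    have c1 : ∫ t in y₁..q, V t / CM ≤ ∫ t in y₁..q, G t := by
      apply intervalIntegral.integral_mono_ae_restrict hy₁q.le iV iG
      exact ae_mono_Icc hy₁mem.1 le_rfl hG
    have c2 : ∫ _t in y₁..q, (V q / 2 / CM) ≤ ∫ t in y₁..q, V t / CM := by
      apply intervalIntegral.integral_mono_on hy₁q.le intervalIntegrable_const iV
      intro t ht
      have := step3 t ht
      gcongr
    have c3 : (∫ _t in y₁..q, (V q / 2 / CM) : ℝ) = (q - y₁) * (V q / 2 / CM) := by
      rw [intervalIntegral.integral_const, smul_eq_mul]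
    have hUq : U q ≤ 0 := hUneg q (Set.right_mem_Icc.2 hpq')
    linarith [c1, c2, c3, e, hUq]
  -- combine
  have hy₁sub : q - y₁ = K1 * T / (4 * K2) := by rw [hy₁]; ring
  have key1 : K1 * T / (4 * K2) * (V q / 2 / CM) ≤ -U m := by
    rw [← hy₁sub]
    have := hUmono hmmem hy₁mem hy₁m
    linarith [step4]
  have key2 : K1 * (T / 2) * (-U m) ≤ V q := step1
  have key3 : K1 * (T / 2) * (K1 * T / (4 * K2) * (V q / 2 / CM)) ≤ K1 * (T / 2) * (-U m) :=
    mul_le_mul_of_nonneg_left key1 (by positivity)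
  have e2 : K1 * (T / 2) * (K1 * T / (4 * K2) * (V q / 2 / CM))
      = T ^ 2 * K1 ^ 2 * V q / (16 * K2 * CM) := by
    field_simp; ring
  have key4 : T ^ 2 * K1 ^ 2 * V q / (16 * K2 * CM) ≤ V q := by
    rw [← e2]; linarith
  rw [div_le_iff₀ (by positivity : (0:ℝ) < 16 * K2 * CM)] at key4
  nlinarith [key4, hVq]

/-- If `v > 0` throughout `[p,q]`, then `(q-p)` is bounded. -/
private lemma no_zero_pos {p q K1 K2 Cm CM : ℝ} {u v g F : ℝ → ℝ}
    (hpq : p < q) (hK1 : 0 < K1) (hK12 : K1 ≤ K2) (hCm : 0 < Cm) (hCmM : Cm ≤ CM)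
    (hgi : IntervalIntegrable g volume p q) (hFi : IntervalIntegrable F volume p q)
    (hu : ∀ y ∈ Set.Icc p q, u y = u p + ∫ t in p..y, g t)
    (hv : ∀ y ∈ Set.Icc p q, v y = v p + ∫ t in p..y, F t)
    (hvpos : ∀ y ∈ Set.Icc p q, 0 < v y)
    (hG : ∀ᵐ t ∂volume.restrict (Set.Ioo p q), v t / CM ≤ g t)
    (hFq : ∀ t ∈ Set.Icc p q, ∃ e, K1 ≤ e ∧ e ≤ K2 ∧ F t = -(e * u t)) :
    (q - p) ^ 2 * K1 ^ 2 ≤ 64 * CM * K2 := by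
  have hpq' : p ≤ q := hpq.le
  have hCM : 0 < CM := hCm.trans_le hCmM
  set m : ℝ := (p + q) / 2 with hm
  have hpm : p ≤ m := by rw [hm]; linarith
  have hmq : m ≤ q := by rw [hm]; linarith
  have hpm' : p < m := by rw [hm]; linarith
  have hmq' : m < q := by rw [hm]; linarith
  have hmmem : m ∈ Set.Icc p q := ⟨hpm, hmq⟩
  have hG0 : ∀ᵐ t ∂volume.restrict (Set.Ioo p q), 0 ≤ g t := by
    filter_upwards [hG, ae_restrict_mem measurableSet_Ioo] with t h1 h2
    have hv := hvpos t ⟨h2.1.le, h2.2.le⟩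
    have : 0 ≤ v t / CM := by positivity
    linarith
  have humono : ∀ ⦃y₁ y₂ : ℝ⦄, y₁ ∈ Set.Icc p q → y₂ ∈ Set.Icc p q → y₁ ≤ y₂ → u y₁ ≤ u y₂ :=
    fun y₁ y₂ h₁ h₂ h12 => primitive_mono hgi hu hG0 h₁ h₂ h12
  by_cases h0 : 0 < u m
  · -- on [m, q] : u > 0, v > 0
    have hkey : (q - m) ^ 2 * K1 ^ 2 ≤ 16 * CM * K2 := by
      apply coreA (U := u) (V := v) (G := g) (F := F) hmq' hK1 hK12 hCM
        (intIntMono hgi hpq' hpm hmq le_rfl) (intIntMono hFi hpq' hpm hmq le_rfl)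
      · intro y hy
        have := primitive_sub hgi hu hmmem ⟨hpm.trans hy.1, hy.2⟩
        linarith
      · intro y hy
        have := primitive_sub hFi hv hmmem ⟨hpm.trans hy.1, hy.2⟩
        linarith
      · intro y hy
        have := humono hmmem ⟨hpm.trans hy.1, hy.2⟩ hy.1
        linarith
      · intro y hy
        exact hvpos y ⟨hpm.trans hy.1, hy.2⟩
      · exact ae_restrict_of_ae_restrict_of_subset (Set.Ioo_subset_Ioo hpm le_rfl) hG
      · intro t ht
        exact hFq t ⟨hpm.trans ht.1, ht.2⟩
    have hqm : q - m = (q - p) / 2 := by rw [hm]; ring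
    rw [hqm] at hkey
    nlinarith [hkey]
  · -- on [p, m] : u ≤ 0, v > 0
    push_neg at h0
    have hkey : (m - p) ^ 2 * K1 ^ 2 ≤ 16 * CM * K2 := by
      apply coreB (U := u) (V := v) (G := g) (F := F) hpm' hK1 hK12 hCM
        (intIntMono hgi hpq' le_rfl hpm hmq) (intIntMono hFi hpq' le_rfl hpm hmq)
      · intro y hy
        have := primitive_sub hgi hu (Set.left_mem_Icc.2 hpq') ⟨hy.1, hy.2.trans hmq⟩
        linarith
      · intro y hy
        have := primitive_sub hFi hv (Set.left_mem_Icc.2 hpq') ⟨hy.1, hy.2.trans hmq⟩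
        linarith
      · intro y hy
        have := humono ⟨hy.1, hy.2.trans hmq⟩ hmmem hy.2
        linarith
      · intro y hy
        exact hvpos y ⟨hy.1, hy.2.trans hmq⟩
      · exact ae_restrict_of_ae_restrict_of_subset (Set.Ioo_subset_Ioo le_rfl hmq) hG
      · intro t ht
        exact hFq t ⟨ht.1, ht.2.trans hmq⟩
    have hmp : m - p = (q - p) / 2 := by rw [hm]; ring
    rw [hmp] at hkey
    nlinarith [hkey]

/-- On any sufficiently long subinterval, `v` has a zero. -/
private lemma exists_zero {p q K1 K2 Cm CM : ℝ} {u v g F : ℝ → ℝ}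
    (hpq : p < q) (hK1 : 0 < K1) (hK12 : K1 ≤ K2) (hCm : 0 < Cm) (hCmM : Cm ≤ CM)
    (hgi : IntervalIntegrable g volume p q) (hFi : IntervalIntegrable F volume p q)
    (hu : ∀ y ∈ Set.Icc p q, u y = u p + ∫ t in p..y, g t)
    (hv : ∀ y ∈ Set.Icc p q, v y = v p + ∫ t in p..y, F t)
    (hgb : ∀ᵐ t ∂volume.restrict (Set.Ioo p q), ∃ cc, Cm ≤ cc ∧ cc ≤ CM ∧ v t = cc * g t)
    (hFq : ∀ t ∈ Set.Icc p q, ∃ e, K1 ≤ e ∧ e ≤ K2 ∧ F t = -(e * u t))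
    (hlen : 64 * CM * K2 < (q - p) ^ 2 * K1 ^ 2) :
    ∃ y ∈ Set.Icc p q, v y = 0 := by
  by_contra hno
  push_neg at hno
  have hpq' : p ≤ q := hpq.le
  have hCM : 0 < CM := hCm.trans_le hCmM
  have hvc : ContinuousOn v (Set.Icc p q) := primitive_continuousOn hpq' hFi hv
  -- v has constant sign
  have hsign : (∀ y ∈ Set.Icc p q, 0 < v y) ∨ (∀ y ∈ Set.Icc p q, v y < 0) := by
    by_contra hc
    push_neg at hc
    obtain ⟨⟨y₁, hy₁, h₁⟩, ⟨y₂, hy₂, h₂⟩⟩ := hc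
    have h₁' : v y₁ < 0 := lt_of_le_of_ne h₁ (hno y₁ hy₁)
    have h₂' : 0 < v y₂ := lt_of_le_of_ne h₂ (Ne.symm (hno y₂ hy₂))
    have hsub : Set.uIcc y₁ y₂ ⊆ Set.Icc p q := Set.uIcc_subset_Icc hy₁ hy₂
    have : (0:ℝ) ∈ Set.uIcc (v y₁) (v y₂) := by
      rw [Set.mem_uIcc]
      left; exact ⟨h₁'.le, h₂'.le⟩
    obtain ⟨z, hz, hz0⟩ := intermediate_value_uIcc (hvc.mono hsub) this
    exact hno z (hsub hz) hz0
  rcases hsign with hpos | hneg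
  · -- v > 0
    have hG : ∀ᵐ t ∂volume.restrict (Set.Ioo p q), v t / CM ≤ g t := by
      filter_upwards [hgb, ae_restrict_mem measurableSet_Ioo] with t h1 h2
      obtain ⟨cc, hc1, hc2, hc3⟩ := h1
      have hvt := hpos t ⟨h2.1.le, h2.2.le⟩
      have hcc : 0 < cc := hCm.trans_le hc1
      have hgt : 0 < g t := by nlinarith
      rw [div_le_iff₀ hCM]
      nlinarith
    have := no_zero_pos hpq hK1 hK12 hCm hCmM hgi hFi hu hv hpos hG hFq
    linarith
  · -- v < 0 : apply the same to (-u, -v, -g, -F)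
    have hG : ∀ᵐ t ∂volume.restrict (Set.Ioo p q), (-v t) / CM ≤ -g t := by
      filter_upwards [hgb, ae_restrict_mem measurableSet_Ioo] with t h1 h2
      obtain ⟨cc, hc1, hc2, hc3⟩ := h1
      have hvt := hneg t ⟨h2.1.le, h2.2.le⟩
      have hcc : 0 < cc := hCm.trans_le hc1
      have hgt : g t < 0 := by nlinarith
      rw [div_le_iff₀ hCM]
      nlinarith
    have hu' : ∀ y ∈ Set.Icc p q, (fun z => -u z) y = (fun z => -u z) p + ∫ t in p..y, -g t := by
      intro y hy
      simp only
      rw [intervalIntegral.integral_neg, hu y hy]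
      ring
    have hv' : ∀ y ∈ Set.Icc p q, (fun z => -v z) y = (fun z => -v z) p + ∫ t in p..y, -F t := by
      intro y hy
      simp only
      rw [intervalIntegral.integral_neg, hv y hy]
      ring
    have hvpos' : ∀ y ∈ Set.Icc p q, 0 < (fun z => -v z) y := by
      intro y hy
      simp only
      linarith [hneg y hy]
    have hFq' : ∀ t ∈ Set.Icc p q, ∃ e, K1 ≤ e ∧ e ≤ K2 ∧ (fun z => -F z) t = -(e * (fun z => -u z) t) := by
      intro t ht
      obtain ⟨e, he1, he2, he3⟩ := hFq t ht
      exact ⟨e, he1, he2, by simp only; rw [he3]; ring⟩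
    have := no_zero_pos (u := fun z => -u z) (v := fun z => -v z) (g := fun z => -g z)
      (F := fun z => -F z) hpq hK1 hK12 hCm hCmM hgi.neg hFi.neg hu' hv' hvpos' hG hFq'
    linarith

/-- Near a zero of the flux, `u` stays within `|u p|/5` of `u p`. -/
private lemma near_zero {p h K2 Cm : ℝ} {u v g F : ℝ → ℝ}
    (hh : 0 < h) (hK2 : 0 < K2) (hCm : 0 < Cm)
    (hgi : IntervalIntegrable g volume p (p + h))
    (hFi : IntervalIntegrable F volume p (p + h))
    (hu : ∀ y ∈ Set.Icc p (p + h), u y = u p + ∫ t in p..y, g t)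
    (hv : ∀ y ∈ Set.Icc p (p + h), v y = v p + ∫ t in p..y, F t)
    (hvp : v p = 0)
    (hgb : ∀ᵐ t ∂volume.restrict (Set.Ioo p (p + h)), |g t| ≤ |v t| / Cm)
    (hFb : ∀ t ∈ Set.Icc p (p + h), |F t| ≤ K2 * |u t|)
    (hsm : K2 * h ^ 2 ≤ Cm / 6) :
    ∀ y ∈ Set.Icc p (p + h), |u y - u p| ≤ |u p| / 5 := by
  set q : ℝ := p + h with hq
  have hpq : p < q := by rw [hq]; linarith
  have hpq' : p ≤ q := hpq.le
  have huc : ContinuousOn u (Set.Icc p q) := primitive_continuousOn hpq' hgi hu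
  have hφc : ContinuousOn (fun y => |u y - u p|) (Set.Icc p q) :=
    (huc.sub continuousOn_const).abs
  obtain ⟨y₁, hy₁mem, hy₁max⟩ := isCompact_Icc.exists_isMaxOn
    (Set.nonempty_Icc.2 hpq') hφc
  set w : ℝ := |u y₁ - u p| with hw
  have hw0 : 0 ≤ w := abs_nonneg _
  have hub : ∀ t ∈ Set.Icc p q, |u t| ≤ |u p| + w := by
    intro t ht
    have h1 : |u t - u p| ≤ w := hy₁max ht
    calc |u t| = |u p + (u t - u p)| := by ring_nf
      _ ≤ |u p| + |u t - u p| := abs_add_le _ _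
      _ ≤ |u p| + w := by linarith
  -- pointwise bound on v
  have hvb : ∀ t ∈ Set.Icc p q, |v t| ≤ K2 * (|u p| + w) * h := by
    intro t ht
    have hvt : v t = ∫ x in p..t, F x := by rw [hv t ht, hvp]; ring
    have hiF : IntervalIntegrable F volume p t := intIntMono hFi hpq' le_rfl ht.1 ht.2
    have c1 : |∫ x in p..t, F x| ≤ ∫ x in p..t, |F x| :=
      intervalIntegral.abs_integral_le_integral_abs ht.1
    have c2 : ∫ x in p..t, |F x| ≤ ∫ _x in p..t, K2 * (|u p| + w) := by
      apply intervalIntegral.integral_mono_on ht.1 hiF.abs intervalIntegrable_const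
      intro x hx
      have hxm : x ∈ Set.Icc p q := ⟨hx.1, hx.2.trans ht.2⟩
      calc |F x| ≤ K2 * |u x| := hFb x hxm
        _ ≤ K2 * (|u p| + w) := mul_le_mul_of_nonneg_left (hub x hxm) hK2.le
    have c3 : (∫ _x in p..t, K2 * (|u p| + w) : ℝ) = (t - p) * (K2 * (|u p| + w)) := by
      rw [intervalIntegral.integral_const, smul_eq_mul]
    have htp : t - p ≤ h := by have := ht.2; rw [hq] at this; linarith
    have h0 : 0 ≤ K2 * (|u p| + w) := by positivity
    rw [hvt]
    calc |∫ x in p..t, F x| ≤ (t - p) * (K2 * (|u p| + w)) := by linarith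
      _ ≤ h * (K2 * (|u p| + w)) := mul_le_mul_of_nonneg_right htp h0
      _ = K2 * (|u p| + w) * h := by ring
  -- main bound : w ≤ (|u p| + w)/6
  have hkey : w ≤ (|u p| + w) / 6 := by
    have e : u y₁ - u p = ∫ t in p..y₁, g t := by
      rw [hu y₁ hy₁mem]; ring
    have hig : IntervalIntegrable g volume p y₁ := intIntMono hgi hpq' le_rfl hy₁mem.1 hy₁mem.2
    have c1 : |∫ t in p..y₁, g t| ≤ ∫ t in p..y₁, |g t| :=
      intervalIntegral.abs_integral_le_integral_abs hy₁mem.1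
    have c2 : ∫ t in p..y₁, |g t| ≤ ∫ _t in p..y₁, K2 * (|u p| + w) * h / Cm := by
      apply intervalIntegral.integral_mono_ae_restrict hy₁mem.1 hig.abs intervalIntegrable_const
      have : ∀ᵐ t ∂volume.restrict (Set.Icc p y₁), |g t| ≤ |v t| / Cm :=
        ae_mono_Icc le_rfl hy₁mem.2 hgb
      filter_upwards [this, ae_restrict_mem measurableSet_Icc] with t h1 h2
      have h3 : |v t| ≤ K2 * (|u p| + w) * h := hvb t ⟨h2.1, h2.2.trans hy₁mem.2⟩
      calc |g t| ≤ |v t| / Cm := h1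
        _ ≤ K2 * (|u p| + w) * h / Cm := by gcongr
    have c3 : (∫ _t in p..y₁, K2 * (|u p| + w) * h / Cm : ℝ)
        = (y₁ - p) * (K2 * (|u p| + w) * h / Cm) := by
      rw [intervalIntegral.integral_const, smul_eq_mul]
    have hy₁h : y₁ - p ≤ h := by have := hy₁mem.2; rw [hq] at this; linarith
    have h0 : 0 ≤ K2 * (|u p| + w) * h / Cm := by positivity
    have hwle : w ≤ (y₁ - p) * (K2 * (|u p| + w) * h / Cm) := by
      calc w = |∫ t in p..y₁, g t| := by rw [hw, e]
        _ ≤ ∫ t in p..y₁, |g t| := c1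
        _ ≤ ∫ _t in p..y₁, K2 * (|u p| + w) * h / Cm := c2
        _ = (y₁ - p) * (K2 * (|u p| + w) * h / Cm) := c3
    have c4 : w ≤ h * (K2 * (|u p| + w) * h / Cm) :=
      hwle.trans (mul_le_mul_of_nonneg_right hy₁h h0)
    have c5 : h * (K2 * (|u p| + w) * h / Cm) = (K2 * h ^ 2) * (|u p| + w) / Cm := by
      ring
    have c6 : (K2 * h ^ 2) * (|u p| + w) / Cm ≤ (Cm / 6) * (|u p| + w) / Cm := by
      have hup : 0 ≤ |u p| + w := by positivity
      gcongr
    have c7 : (Cm / 6) * (|u p| + w) / Cm = (|u p| + w) / 6 := by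
      field_simp
    linarith [c4, c5.le, c6, c7.le]
  intro y hy
  have := hy₁max hy
  have h6 : 6 * w ≤ |u p| + w := by linarith
  have : w ≤ |u p| / 5 := by linarith
  calc |u y - u p| ≤ w := hy₁max hy
    _ ≤ |u p| / 5 := this


/-- the minimal amplitude hypothesis implies non-concentration in any
layer `(a, b)`; `lam₀` depends only on `ε, cm, cM, b - a = δ`, and `d` in addition on `r`. -/
theorem stmt9 (cm cM : ℝ) (hcm : 0 < cm) (hcmM : cm < cM) :
    ∀ ε > (0:ℝ), ∀ δ > (0:ℝ), ∃ lam₀ > (0:ℝ), ∀ r > (0:ℝ), ∃ d > (0:ℝ),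
      ∀ H : ℝ, 0 < H →
      ∀ a b : ℝ, 0 ≤ a → a < b → b ≤ H → b - a = δ →
      ∀ c : ℝ → ℝ, IsCoeff H cm cM c →
      ∀ μ : ℝ, 0 < μ → ∀ lam : ℝ, lam₀ < lam → (cM + ε) * μ ^ 2 ≤ lam →
      ∀ u v g : ℝ → ℝ, IsReducedSolutionOn 0 H c μ lam u v g →
      u 0 = 0 → u H = 0 → (∫ y in (0:ℝ)..H, u y ^ 2) = 1 →
      (∀ y ∈ Set.Icc (0 : ℝ) H, r ^ 2 ≤ u y ^ 2 + v y ^ 2) →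
      d ≤ ∫ y in a..b, u y ^ 2 := by

  intro ε hε δ hδ
  have hcM : 0 < cM := hcm.trans hcmM
  obtain ⟨C₁, hC₁⟩ : ∃ x : ℝ, x = 64 * cM * (cM + ε) ^ 2 / ε ^ 2 := ⟨_, rfl⟩
  have hC₁0 : 0 ≤ C₁ := by rw [hC₁]; positivity
  obtain ⟨S₀, hS₀⟩ : ∃ x : ℝ, x = Real.sqrt C₁ + 1 + Real.sqrt (cm / 6) := ⟨_, rfl⟩
  have hS₀0 : 0 < S₀ := by
    have := Real.sqrt_nonneg C₁
    have := Real.sqrt_nonneg (cm / 6)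
    rw [hS₀]; linarith
  refine ⟨max 1 ((2 * S₀ / δ) ^ 2), lt_of_lt_of_le one_pos (le_max_left _ _), ?_⟩
  intro r hr
  have hcm6 : 0 < Real.sqrt (cm / 6) := Real.sqrt_pos.mpr (by linarith)
  have hd0 : 0 < δ * Real.sqrt (cm / 6) * r ^ 2 / (8 * S₀) :=
    div_pos (mul_pos (mul_pos hδ hcm6) (pow_pos hr 2)) (by linarith)
  refine ⟨_, hd0, ?_⟩
  intro H hH a b ha hab hbH hba c hcoeff μ hμ lam hlam hμlam u v g hsol hu0 huH hnorm hamp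
  obtain ⟨hcmeas, hcb⟩ := hcoeff
  obtain ⟨hgi, hg2i, hu, hvg, hFi, hv⟩ := hsol
  have h0H : (0:ℝ) ≤ H := hH.le
  have hlam1 : (1:ℝ) < lam := lt_of_le_of_lt (le_max_left _ _) hlam
  have hlam0 : (0:ℝ) < lam := by linarith
  have hcMε : (0:ℝ) < cM + ε := by linarith
  obtain ⟨K1, hK1d⟩ : ∃ x : ℝ, x = ε * lam / (cM + ε) := ⟨_, rfl⟩
  have hK1 : 0 < K1 := by rw [hK1d]; exact div_pos (mul_pos hε hlam0) hcMε
  have hK12 : K1 ≤ lam := by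
    rw [hK1d, div_le_iff₀ hcMε]
    nlinarith only [mul_pos hlam0 hcM]
  -- bounds on the potential
  have hqb : ∀ t ∈ Set.Icc (0:ℝ) H, K1 ≤ lam - c t * μ ^ 2 ∧ lam - c t * μ ^ 2 ≤ lam := by
    intro t ht
    obtain ⟨hc1, hc2⟩ := hcb t ht
    have hμ2 : (0:ℝ) ≤ μ ^ 2 := sq_nonneg μ
    constructor
    · rw [hK1d, div_le_iff₀ hcMε]
      have h1 : c t * μ ^ 2 ≤ cM * μ ^ 2 := mul_le_mul_of_nonneg_right hc2 hμ2
      have hA := mul_le_mul_of_nonneg_right h1 hcMε.le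
      have hB := mul_le_mul_of_nonneg_left hμlam hcM.le
      linarith only [hA, hB]
    · linarith only [mul_nonneg (by linarith only [hcm, hc1] : (0:ℝ) ≤ c t) hμ2]
  have hFq : ∀ t ∈ Set.Icc (0:ℝ) H, ∃ e, K1 ≤ e ∧ e ≤ lam ∧
      (c t * μ ^ 2 - lam) * u t = -(e * u t) := by
    intro t ht
    exact ⟨lam - c t * μ ^ 2, (hqb t ht).1, (hqb t ht).2, by ring⟩
  have hgb : ∀ᵐ t ∂volume.restrict (Set.Ioo (0:ℝ) H),
      ∃ cc, cm ≤ cc ∧ cc ≤ cM ∧ v t = cc * g t := by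
    filter_upwards [hvg, ae_restrict_mem measurableSet_Ioo] with t h1 h2
    exact ⟨c t, (hcb t ⟨h2.1.le, h2.2.le⟩).1, (hcb t ⟨h2.1.le, h2.2.le⟩).2, h1⟩
  -- geometric quantities
  have hsl : 0 < Real.sqrt lam := Real.sqrt_pos.mpr hlam0
  obtain ⟨L, hL⟩ : ∃ x : ℝ, x = (Real.sqrt C₁ + 1) / Real.sqrt lam := ⟨_, rfl⟩
  obtain ⟨τ, hτ⟩ : ∃ x : ℝ, x = Real.sqrt (cm / 6) / Real.sqrt lam := ⟨_, rfl⟩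
  obtain ⟨P, hP⟩ : ∃ x : ℝ, x = L + τ := ⟨_, rfl⟩
  have hL0 : 0 < L := by
    rw [hL]; exact div_pos (by linarith [Real.sqrt_nonneg C₁]) hsl
  have hτ0 : 0 < τ := by rw [hτ]; exact div_pos hcm6 hsl
  have hP0 : 0 < P := by rw [hP]; linarith
  have hPS : P = S₀ / Real.sqrt lam := by rw [hP, hL, hτ, hS₀]; ring
  have hsx : 2 * S₀ / δ < Real.sqrt lam := by
    have h1 : (2 * S₀ / δ) ^ 2 < lam := lt_of_le_of_lt (le_max_right _ _) hlam
    have hx0 : 0 ≤ 2 * S₀ / δ := le_of_lt (div_pos (by linarith) hδ)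
    exact (Real.lt_sqrt hx0).mpr h1
  have hPδ : 2 * P ≤ δ := by
    rw [hPS]
    rw [div_lt_iff₀ hδ] at hsx
    rw [show (2:ℝ) * (S₀ / Real.sqrt lam) = 2 * S₀ / Real.sqrt lam by ring, div_le_iff₀ hsl]
    linarith only [hsx]
  obtain ⟨N, hN⟩ : ∃ n : ℕ, n = ⌊δ / P⌋₊ := ⟨_, rfl⟩
  have hδP : 2 ≤ δ / P := by rw [le_div_iff₀ hP0]; linarith
  have hNle : (N:ℝ) ≤ δ / P := by rw [hN]; exact Nat.floor_le (le_of_lt (div_pos hδ hP0))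
  have hNge : δ / P - 1 ≤ (N:ℝ) := by rw [hN]; exact le_of_lt (Nat.sub_one_lt_floor _)
  have hNhalf : δ / (2 * P) ≤ (N:ℝ) := by
    have he : δ / (2 * P) = (δ / P) / 2 := by
      rw [div_div, mul_comm]
    rw [he]; linarith
  have hNP : (N:ℝ) * P ≤ δ := by
    calc (N:ℝ) * P ≤ (δ / P) * P := mul_le_mul_of_nonneg_right hNle hP0.le
      _ = δ := div_mul_cancel₀ δ hP0.ne'
  have hbeq : b = a + δ := by linarith
  -- continuity and integrability of u²
  have huc : ContinuousOn u (Set.Icc 0 H) := primitive_continuousOn h0H hgi hu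
  have hu2c : ContinuousOn (fun y => u y ^ 2) (Set.Icc 0 H) := huc.pow 2
  have hu2i : ∀ p' q' : ℝ, 0 ≤ p' → p' ≤ q' → q' ≤ H →
      IntervalIntegrable (fun y => u y ^ 2) volume p' q' :=
    fun p' q' h1 h2 h3 => cont_intervalIntegrable hu2c h1 h2 h3
  -- small constant for near_zero
  have hsmall : lam * τ ^ 2 ≤ cm / 6 := by
    have hτ2 : τ ^ 2 = (cm / 6) / lam := by
      rw [hτ, div_pow, Real.sq_sqrt (by linarith : (0:ℝ) ≤ cm / 6), Real.sq_sqrt hlam0.le]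
    rw [hτ2, mul_comm, div_mul_cancel₀ _ hlam0.ne']
  -- the length condition for exists_zero
  have hlen : ∀ s : ℝ, 64 * cM * lam < (s + L - s) ^ 2 * K1 ^ 2 := by
    intro s
    have hsL : s + L - s = L := by ring
    rw [hsL]
    have hsq : Real.sqrt C₁ ^ 2 = C₁ := Real.sq_sqrt hC₁0
    have hL2 : L ^ 2 = (Real.sqrt C₁ + 1) ^ 2 / lam := by
      rw [hL, div_pow, Real.sq_sqrt hlam0.le]
    have hK1sq : K1 ^ 2 = ε ^ 2 * lam ^ 2 / (cM + ε) ^ 2 := by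
      rw [hK1d, div_pow, mul_pow]
    rw [hL2, hK1sq, div_mul_div_comm, lt_div_iff₀ (by positivity)]
    have hexp : (Real.sqrt C₁ + 1) ^ 2 = C₁ + 2 * Real.sqrt C₁ + 1 := by
      rw [add_sq, hsq]; ring
    have hC₁e : C₁ * ε ^ 2 = 64 * cM * (cM + ε) ^ 2 := by
      rw [hC₁]; field_simp
    have hkey : C₁ * ε ^ 2 * lam ^ 2 < (C₁ + 2 * Real.sqrt C₁ + 1) * (ε ^ 2 * lam ^ 2) := by
      nlinarith only [Real.sqrt_nonneg C₁, mul_pos (pow_pos hε 2) (pow_pos hlam0 2)]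
    have e3 : (Real.sqrt C₁ + 1) ^ 2 * (ε ^ 2 * lam ^ 2)
        = (C₁ + 2 * Real.sqrt C₁ + 1) * (ε ^ 2 * lam ^ 2) := by rw [hexp]
    have e4 : 64 * cM * lam * (lam * (cM + ε) ^ 2) = C₁ * ε ^ 2 * lam ^ 2 := by
      rw [hC₁]; field_simp
    rw [e4, e3]
    exact hkey
  -- per-block estimate
  have hblock : ∀ s : ℝ, 0 ≤ s → s + P ≤ b → τ * (r ^ 2 / 4) ≤ ∫ y in s..(s + P), u y ^ 2 := by
    intro s hs hsPb
    have hsH : s + P ≤ H := le_trans hsPb hbH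
    have hsLP : s + L ≤ s + P := by rw [hP]; linarith
    have hsLH : s + L ≤ H := le_trans hsLP hsH
    have hsL0 : s < s + L := by linarith
    have hsmem : s ∈ Set.Icc (0:ℝ) H := ⟨hs, by linarith⟩
    -- find a zero of v in [s, s+L]
    obtain ⟨y₀, hy₀mem, hy₀z⟩ := exists_zero (p := s) (q := s + L) hsL0 hK1 hK12 hcm hcmM.le
      (intIntMono hgi h0H hs hsL0.le hsLH) (intIntMono hFi h0H hs hsL0.le hsLH)
      (fun y hy => by
        have := primitive_sub hgi hu hsmem ⟨le_trans hs hy.1, le_trans hy.2 hsLH⟩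
        linarith)
      (fun y hy => by
        have := primitive_sub hFi hv hsmem ⟨le_trans hs hy.1, le_trans hy.2 hsLH⟩
        linarith)
      (ae_restrict_of_ae_restrict_of_subset (Set.Ioo_subset_Ioo hs hsLH) hgb)
      (fun t ht => hFq t ⟨le_trans hs ht.1, le_trans ht.2 hsLH⟩)
      (hlen s)
    have hy₀0 : 0 ≤ y₀ := le_trans hs hy₀mem.1
    have hy₀τP : y₀ + τ ≤ s + P := by
      have := hy₀mem.2; rw [hP]; linarith
    have hy₀τH : y₀ + τ ≤ H := le_trans hy₀τP hsH
    have hy₀H : y₀ ∈ Set.Icc (0:ℝ) H := ⟨hy₀0, by linarith⟩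
    have hy₀memIcc : y₀ ∈ Set.Icc (0:ℝ) H := hy₀H
    -- near the zero, |u| stays close to |u y₀|
    have hnear := near_zero (p := y₀) (h := τ) (K2 := lam) (Cm := cm)
      (u := u) (v := v) (g := g) (F := fun t => (c t * μ ^ 2 - lam) * u t)
      hτ0 hlam0 hcm
      (intIntMono hgi h0H hy₀0 (by linarith) hy₀τH)
      (intIntMono hFi h0H hy₀0 (by linarith) hy₀τH)
      (fun y hy => by
        have := primitive_sub hgi hu hy₀H ⟨le_trans hy₀0 hy.1, le_trans hy.2 hy₀τH⟩
        linarith)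
      (fun y hy => by
        have := primitive_sub hFi hv hy₀H ⟨le_trans hy₀0 hy.1, le_trans hy.2 hy₀τH⟩
        linarith)
      hy₀z
      (by
        filter_upwards [ae_restrict_of_ae_restrict_of_subset
          (Set.Ioo_subset_Ioo hy₀0 hy₀τH) hgb,
          ae_restrict_mem measurableSet_Ioo] with t h1 _h2
        obtain ⟨cc, hc1, hc2, hc3⟩ := h1
        have hcc : 0 < cc := lt_of_lt_of_le hcm hc1
        rw [le_div_iff₀ hcm, hc3, abs_mul, abs_of_pos hcc]
        have := mul_le_mul_of_nonneg_right hc1 (abs_nonneg (g t))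
        linarith only [this])
      (fun t ht => by
        have htH : t ∈ Set.Icc (0:ℝ) H := ⟨le_trans hy₀0 ht.1, le_trans ht.2 hy₀τH⟩
        obtain ⟨h1, h2⟩ := hqb t htH
        rw [abs_mul]
        have h3 : |c t * μ ^ 2 - lam| = lam - c t * μ ^ 2 := by
          rw [abs_of_nonpos (by linarith)]; ring
        rw [h3]
        exact mul_le_mul_of_nonneg_right h2 (abs_nonneg _))
      hsmall
    -- amplitude : |u y₀| ≥ r
    have hampy : r ^ 2 ≤ u y₀ ^ 2 := by
      have := hamp y₀ hy₀H
      rw [hy₀z] at this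
      norm_num at this
      exact this
    have hrle : r ≤ |u y₀| := by
      nlinarith only [abs_nonneg (u y₀), sq_abs (u y₀), hampy, hr]
    -- pointwise lower bound on [y₀, y₀+τ]
    have hpt : ∀ y ∈ Set.Icc y₀ (y₀ + τ), r ^ 2 / 4 ≤ u y ^ 2 := by
      intro y hy
      have h1 := hnear y hy
      have h2 : |u y₀| - |u y| ≤ |u y₀ - u y| := abs_sub_abs_le_abs_sub _ _
      have h3 : |u y₀ - u y| = |u y - u y₀| := abs_sub_comm _ _
      have h4 : 4 / 5 * |u y₀| ≤ |u y| := by linarith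
      have h5 : 4 / 5 * r ≤ |u y| := by linarith only [h4, hrle]
      nlinarith only [h5, hr.le, sq_abs (u y), abs_nonneg (u y)]
    -- integrate
    have hyint : τ * (r ^ 2 / 4) ≤ ∫ y in y₀..(y₀ + τ), u y ^ 2 := by
      have hc : (∫ _y in y₀..(y₀ + τ), (r ^ 2 / 4) : ℝ) = τ * (r ^ 2 / 4) := by
        rw [intervalIntegral.integral_const, smul_eq_mul]; ring_nf
      have := intervalIntegral.integral_mono_on (by linarith : y₀ ≤ y₀ + τ)
        intervalIntegrable_const (hu2i y₀ (y₀ + τ) hy₀0 (by linarith) hy₀τH) hpt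
      linarith
    have hsub : (∫ y in y₀..(y₀ + τ), u y ^ 2) ≤ ∫ y in s..(s + P), u y ^ 2 := by
      apply intervalIntegral.integral_mono_interval hy₀mem.1 (by linarith : y₀ ≤ y₀ + τ)
        hy₀τP (ae_of_all _ fun t => sq_nonneg (u t)) (hu2i s (s + P) hs (by linarith) hsH)
    linarith
  -- induction over blocks
  have hmain : ∀ k : ℕ, k ≤ N → (k:ℝ) * (τ * (r ^ 2 / 4)) ≤ ∫ y in a..(a + (k:ℝ) * P), u y ^ 2 := by
    intro k
    induction k with
    | zero => intro _; simp
    | succ n ih =>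
      intro hkN
      have hnN : n ≤ N := le_trans (Nat.le_succ n) hkN
      have ihh := ih hnN
      have hn1 : ((n:ℝ) + 1) ≤ (N:ℝ) := by
        have h := (Nat.cast_le (α := ℝ)).mpr hkN
        push_cast at h
        linarith only [h]
      have hnn : (0:ℝ) ≤ (n:ℝ) := Nat.cast_nonneg n
      have hnP1 : a + ((n:ℝ) + 1) * P ≤ b := by
        have : ((n:ℝ) + 1) * P ≤ (N:ℝ) * P := mul_le_mul_of_nonneg_right hn1 hP0.le
        rw [hbeq]; linarith
      have hmono : (n:ℝ) * P ≤ ((n:ℝ) + 1) * P := by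
        have := hP0.le
        nlinarith only [hP0.le]
      have hnP0 : a + (n:ℝ) * P ≤ b := by linarith only [hmono, hnP1]
      have hs0 : 0 ≤ a + (n:ℝ) * P := by
        linarith only [mul_nonneg hnn hP0.le, ha]
      have hsplit : (∫ y in a..(a + (n:ℝ) * P), u y ^ 2)
          + (∫ y in (a + (n:ℝ) * P)..(a + (n:ℝ) * P + P), u y ^ 2)
          = ∫ y in a..(a + (n:ℝ) * P + P), u y ^ 2 := by
        apply intervalIntegral.integral_add_adjacent_intervals
        · exact hu2i a (a + (n:ℝ) * P) ha (by linarith only [mul_nonneg hnn hP0.le]) (le_trans hnP0 hbH)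
        · exact hu2i (a + (n:ℝ) * P) (a + (n:ℝ) * P + P) hs0 (by linarith)
            (by rw [show a + (n:ℝ) * P + P = a + ((n:ℝ) + 1) * P by ring]
                exact le_trans hnP1 hbH)
      have hstep := hblock (a + (n:ℝ) * P) hs0
        (by rw [show a + (n:ℝ) * P + P = a + ((n:ℝ) + 1) * P by ring]; exact hnP1)
      have hE : a + ((n:ℕ) + 1 : ℕ) * P = a + (n:ℝ) * P + P := by push_cast; ring
      push_cast
      rw [show a + ((n:ℝ) + 1) * P = a + (n:ℝ) * P + P by ring, ← hsplit]
      have : ((n:ℝ) + 1) * (τ * (r ^ 2 / 4)) = (n:ℝ) * (τ * (r ^ 2 / 4)) + τ * (r ^ 2 / 4) := by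
        ring
      rw [this]
      exact add_le_add ihh hstep
  -- conclusion
  have hNb := hmain N le_rfl
  have haNP : a ≤ a + (N:ℝ) * P := by
    linarith only [mul_nonneg (Nat.cast_nonneg (α := ℝ) N) hP0.le]
  have hfinal : (∫ y in a..(a + (N:ℝ) * P), u y ^ 2) ≤ ∫ y in a..b, u y ^ 2 := by
    apply intervalIntegral.integral_mono_interval le_rfl haNP (by rw [hbeq]; linarith)
      (ae_of_all _ fun t => sq_nonneg (u t)) (hu2i a b ha hab.le hbH)
  have hdN : δ * Real.sqrt (cm / 6) * r ^ 2 / (8 * S₀) ≤ (N:ℝ) * (τ * (r ^ 2 / 4)) := by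
    have h1 : δ / (2 * P) * (τ * (r ^ 2 / 4)) = δ * Real.sqrt (cm / 6) * r ^ 2 / (8 * S₀) := by
      rw [hPS, hτ]
      field_simp
      ring
    have h2 : 0 ≤ τ * (r ^ 2 / 4) := by positivity
    calc δ * Real.sqrt (cm / 6) * r ^ 2 / (8 * S₀)
        = δ / (2 * P) * (τ * (r ^ 2 / 4)) := h1.symm
      _ ≤ (N:ℝ) * (τ * (r ^ 2 / 4)) := mul_le_mul_of_nonneg_right hNhalf h2
  linarith
end
end
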